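/- arXiv:1611.07701 — 8 statements merged into one kernel-verified Lean document; each statement's English description precedes it below -/
import Mathlib

section
/- Let G be a finite simple graph, let Ĝ be the double subdivision of G, and let k ∈ ℕ. Then G has a vertex cover of size at most k if and only if Ĝ has a vertex cover of size at most k + |E(G)|. -/
/-- The double subdivision `Ĝ` of a finite simple graph `G`: every edge `{v,u}` of `G`
is subdivided twice, introducing the new vertices `x_{v,u} = Sum.inr (v, u)` and
`x_{u,v} = Sum.inr (u, v)`, and the edges `{v, x_{v,u}}`, `{u, x_{u,v}}` and
`{x_{v,u}, x_{u,v}}`.  (Pairs `(v, u)` with `v` not adjacent to `u` give isolated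
vertices.) -/
def doubleSubdivision {V : Type*} (G : SimpleGraph V) : SimpleGraph (V ⊕ V × V) :=
  SimpleGraph.fromRel fun a b =>
    (∃ v u, G.Adj v u ∧ a = Sum.inl v ∧ b = Sum.inr (v, u)) ∨
    (∃ v u, G.Adj v u ∧ a = Sum.inr (v, u) ∧ b = Sum.inr (u, v))

/-!
A cover `S` of `G` yields a cover of `Ĝ`: keep `S` and, on each edge, add the subdivision
vertex `x_{v,u}` whose far end `u` lies in `S`. Conversely, a cover `T` of `Ĝ` contains at
least one subdivision vertex of every edge, and both of them on an edge neither of whose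
endpoints lies in `T`; so the original vertices of `T`, together with one endpoint of each
such edge, form a cover of `G` with at most `#T - #E(G)` vertices.
-/

open Finset

namespace SimpleGraph

variable {V : Type*} {G : SimpleGraph V}

theorem isVertexCover_doubleSubdivision_iff {T : Set (V ⊕ V × V)} :
    (doubleSubdivision G).IsVertexCover T ↔ ∀ ⦃v u⦄, G.Adj v u →
      (.inl v ∈ T ∨ .inr (v, u) ∈ T) ∧ (.inr (v, u) ∈ T ∨ .inr (u, v) ∈ T) := by
  constructor
  · intro hT v u h
    refine ⟨hT ?_, hT ?_⟩ <;> rw [doubleSubdivision, fromRel_adj]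
    · exact ⟨by simp, .inl (.inl ⟨v, u, h, rfl, rfl⟩)⟩
    · exact ⟨by simp [h.ne], .inl (.inr ⟨v, u, h, rfl, rfl⟩)⟩
  · intro hT a b hab
    rw [doubleSubdivision, fromRel_adj] at hab
    obtain ⟨-, (⟨v, u, h, rfl, rfl⟩ | ⟨v, u, h, rfl, rfl⟩) |
      (⟨v, u, h, rfl, rfl⟩ | ⟨v, u, h, rfl, rfl⟩)⟩ := hab
    · exact (hT h).1
    · exact (hT h).2
    · exact (hT h).1.symm
    · exact (hT h).2.symm

variable [DecidableEq V] [Fintype G.edgeSet]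

theorem card_edgeFinset_add_card_le {P : Finset (V × V)} {B : Finset (Sym2 V)}
    (hB : B ⊆ G.edgeFinset) (hP : ∀ ⦃v u⦄, G.Adj v u → (v, u) ∈ P ∨ (u, v) ∈ P)
    (hBP : ∀ ⦃v u⦄, s(v, u) ∈ B → (v, u) ∈ P) :
    #G.edgeFinset + #B ≤ #P := by
  have hfiber : ∀ e ∈ G.edgeFinset,
      1 + (if e ∈ B then 1 else 0) ≤ #{p ∈ P | s(p.1, p.2) = e} := by
    intro e he
    induction e using Sym2.inductionOn with | hf v u
    have hvu : G.Adj v u := mem_edgeFinset.1 he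
    split_ifs with hB
    · have hpair : {(v, u), (u, v)} ⊆ {p ∈ P | s(p.1, p.2) = s(v, u)} := by
        simp [insert_subset_iff, hBP hB, hBP (Sym2.eq_swap ▸ hB)]
      have hne : (v, u) ≠ (u, v) := by simp [hvu.ne]
      exact (card_pair hne).ge.trans (card_le_card hpair)
    · obtain h | h := hP hvu
      · exact card_pos.2 ⟨(v, u), by simp [h]⟩
      · exact card_pos.2 ⟨(u, v), by simp [h]⟩
  calc #G.edgeFinset + #B = ∑ e ∈ G.edgeFinset, (1 + if e ∈ B then 1 else 0) := by
        simp [sum_add_distrib, inter_eq_right.2 hB]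
    _ ≤ ∑ e ∈ G.edgeFinset, #{p ∈ P | s(p.1, p.2) = e} := sum_le_sum hfiber
    _ = #{p ∈ P | s(p.1, p.2) ∈ G.edgeFinset} := sum_card_fiberwise_eq_card_filter _ _ _
    _ ≤ #P := card_filter_le _ _

theorem IsVertexCover.exists_doubleSubdivision {S : Finset V} (hS : G.IsVertexCover S) :
    ∃ T : Finset (V ⊕ V × V), (doubleSubdivision G).IsVertexCover T ∧
      #T ≤ #S + #G.edgeFinset := by
  have horient : ∀ e : G.edgeSet, ∃ p : V × V, s(p.1, p.2) = e ∧ p.2 ∈ S := by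
    rintro ⟨e, he⟩
    induction e using Sym2.inductionOn with | hf v u
    obtain hv | hu := hS he
    · exact ⟨(u, v), Sym2.eq_swap, hv⟩
    · exact ⟨(v, u), rfl, hu⟩
  choose orient horient_edge horient_mem using horient
  refine ⟨S.disjSum (univ.image orient), ?_, ?_⟩
  · rw [isVertexCover_doubleSubdivision_iff]
    intro v u hvu
    have hmem : .inr (orient ⟨s(v, u), hvu⟩) ∈ S.disjSum (univ.image orient) :=
      inr_mem_disjSum.2 (mem_image_of_mem _ (mem_univ _))
    have hS' := horient_mem ⟨s(v, u), hvu⟩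
    obtain h | h := (Sym2.mk_eq_mk_iff (q := (v, u))).1 (horient_edge ⟨s(v, u), hvu⟩)
    · rw [h] at hmem
      exact ⟨.inr hmem, .inl hmem⟩
    · rw [h] at hmem hS'
      exact ⟨.inl (inl_mem_disjSum.2 hS'), .inr hmem⟩
  · rw [card_disjSum, edgeFinset_card]
    exact Nat.add_le_add_left card_image_le _

theorem exists_isVertexCover_of_doubleSubdivision {T : Finset (V ⊕ V × V)}
    (hT : (doubleSubdivision G).IsVertexCover T) :
    ∃ S : Finset V, G.IsVertexCover S ∧ #S + #G.edgeFinset ≤ #T := by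
  classical
  rw [isVertexCover_doubleSubdivision_iff] at hT
  set B := {e ∈ G.edgeFinset | ∀ v ∈ e, v ∉ T.toLeft}
  refine ⟨T.toLeft ∪ B.image (·.out.1), ?_, ?_⟩
  · intro v u hvu
    by_cases hv : v ∈ T.toLeft
    · exact .inl (mem_union_left _ hv)
    by_cases hu : u ∈ T.toLeft
    · exact .inr (mem_union_left _ hu)
    have hB : s(v, u) ∈ B := mem_filter.2 ⟨mem_edgeFinset.2 hvu, fun w hw => by
      obtain rfl | rfl := Sym2.mem_iff.1 hw <;> assumption⟩
    have hout := mem_union_right T.toLeft (mem_image_of_mem (·.out.1) hB)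
    obtain h | h := Sym2.mem_iff.1 (Sym2.out_fst_mem s(v, u))
    · exact .inl (h ▸ hout)
    · exact .inr (h ▸ hout)
  · have hcount : #G.edgeFinset + #B ≤ #T.toRight := by
      refine card_edgeFinset_add_card_le (filter_subset _ _) (fun v u hvu => ?_) ?_
      · simpa using (hT hvu).2
      · intro v u hB
        have hv : v ∉ T.toLeft := (mem_filter.1 hB).2 v (Sym2.mem_mk_left v u)
        have hvu : G.Adj v u := mem_edgeFinset.1 (mem_filter.1 hB).1
        exact mem_toRight.2 ((hT hvu).1.resolve_left (mt mem_toLeft.2 hv))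
    calc #(T.toLeft ∪ B.image (·.out.1)) + #G.edgeFinset
        ≤ #T.toLeft + #B + #G.edgeFinset := by
          gcongr
          exact (card_union_le _ _).trans (Nat.add_le_add_left card_image_le _)
      _ ≤ #T.toLeft + #T.toRight := by omega
      _ = #T := card_toLeft_add_card_toRight

end SimpleGraph

/-- Let `G` be a finite simple graph, `Ĝ` its double subdivision and
`k ∈ ℕ`. Then `G` has a vertex cover of size at most `k` if and only if `Ĝ` has a
vertex cover of size at most `k + |E(G)|`. -/
theorem stmt_4 {V : Type*} [Fintype V] [DecidableEq V] (G : SimpleGraph V)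
    [DecidableRel G.Adj] (k : ℕ) :
    (∃ S : Finset V, S.card ≤ k ∧ ∀ ⦃a b : V⦄, G.Adj a b → a ∈ S ∨ b ∈ S) ↔
    (∃ S : Finset (V ⊕ V × V), S.card ≤ k + G.edgeFinset.card ∧
      ∀ ⦃a b : V ⊕ V × V⦄, (doubleSubdivision G).Adj a b → a ∈ S ∨ b ∈ S) := by
  constructor
  · rintro ⟨S, hSk, hS⟩
    obtain ⟨T, hT, hTS⟩ := SimpleGraph.IsVertexCover.exists_doubleSubdivision (S := S) hS
    exact ⟨T, by omega, hT⟩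
  · rintro ⟨T, hTk, hT⟩
    obtain ⟨S, hS, hST⟩ := SimpleGraph.exists_isVertexCover_of_doubleSubdivision (T := T) hT
    exact ⟨S, by omega, hS⟩
end

section
/- Let G be a finite simple graph and let Ĝ be the double subdivision of G. Then every path in Ĝ between two distinct vertices of degree 3 in Ĝ contains an edge of the form {x_{v,u}, x_{u,v}} for some edge {v,u} ∈ E(G). -/
/-!
Send every vertex of `Ĝ` to the nearest vertex of `G`: `v ↦ v` and `x_{v,u} ↦ v`. The only
edges of `Ĝ` whose ends have different images are the middle edges `{x_{v,u}, x_{u,v}}`, so a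
walk between vertices with different images must use one. The subdivision vertices have
degree at most `2`, so the two endpoints of degree `3` are distinct vertices of `G`.
-/

namespace doubleSubdivision

variable {V : Type*} {G : SimpleGraph V}

def base : V ⊕ V × V → V := Sum.elim id Prod.fst

@[simp] lemma base_inl (v : V) : base (Sum.inl v : V ⊕ V × V) = v := rfl

lemma exists_middle_edge_of_adj_of_base_ne {x y : V ⊕ V × V}
    (hxy : (doubleSubdivision G).Adj x y) (hbase : base x ≠ base y) :
    ∃ v u, G.Adj v u ∧ x = Sum.inr (v, u) ∧ y = Sum.inr (u, v) := by
  obtain ⟨-, (⟨v, u, hvu, rfl, rfl⟩ | ⟨v, u, hvu, rfl, rfl⟩) |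
      (⟨v, u, hvu, rfl, rfl⟩ | ⟨v, u, hvu, rfl, rfl⟩)⟩ := hxy
  · exact absurd rfl hbase
  · exact ⟨v, u, hvu, rfl, rfl⟩
  · exact absurd rfl hbase
  · exact ⟨u, v, hvu.symm, rfl, rfl⟩

lemma Walk.exists_middle_edge_mem_edges_of_base_ne {a b : V ⊕ V × V}
    (p : (doubleSubdivision G).Walk a b) (hab : base a ≠ base b) :
    ∃ v u, G.Adj v u ∧
      s((Sum.inr (v, u) : V ⊕ V × V), (Sum.inr (u, v) : V ⊕ V × V)) ∈ p.edges := by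
  obtain ⟨d, hd, hfst, hsnd⟩ := p.exists_boundary_dart {x | base x = base a} rfl (Ne.symm hab)
  obtain ⟨v, u, hvu, hx, hy⟩ :=
    exists_middle_edge_of_adj_of_base_ne d.adj (fun h ↦ hsnd (h.symm.trans hfst))
  refine ⟨v, u, hvu, ?_⟩
  rw [← hx, ← hy]
  exact List.mem_map_of_mem hd

lemma neighborSet_inr_subset (v u : V) :
    (doubleSubdivision G).neighborSet (Sum.inr (v, u)) ⊆ {Sum.inl v, Sum.inr (u, v)} := by
  rintro y ⟨-, (⟨v', u', -, h, rfl⟩ | ⟨v', u', -, h, rfl⟩) |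
      (⟨v', u', -, rfl, h⟩ | ⟨v', u', -, rfl, h⟩)⟩ <;> simp_all

lemma card_neighborSet_inr_le_two (q : V × V) :
    Nat.card ((doubleSubdivision G).neighborSet (Sum.inr q)) ≤ 2 := by
  rw [Nat.card_coe_set_eq]
  calc _ ≤ ({Sum.inl q.1, Sum.inr (q.2, q.1)} : Set (V ⊕ V × V)).ncard :=
        Set.ncard_le_ncard (neighborSet_inr_subset q.1 q.2) (Set.toFinite _)
    _ ≤ 2 := (Set.ncard_insert_le _ _).trans (by simp)

lemma exists_eq_inl_of_card_neighborSet_eq_three {x : V ⊕ V × V}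
    (hx : Nat.card ((doubleSubdivision G).neighborSet x) = 3) : ∃ v, x = Sum.inl v := by
  rcases x with v | q
  · exact ⟨v, rfl⟩
  · have := card_neighborSet_inr_le_two (G := G) q
    omega

end doubleSubdivision

theorem stmt_5_general {V : Type*} (G : SimpleGraph V)
    (a b : V ⊕ V × V) (hab : a ≠ b)
    (ha : Nat.card ((doubleSubdivision G).neighborSet a) = 3)
    (hb : Nat.card ((doubleSubdivision G).neighborSet b) = 3)
    (p : (doubleSubdivision G).Walk a b) :
    ∃ v u, G.Adj v u ∧
      s((Sum.inr (v, u) : V ⊕ V × V), (Sum.inr (u, v) : V ⊕ V × V)) ∈ p.edges := by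
  obtain ⟨v, rfl⟩ := doubleSubdivision.exists_eq_inl_of_card_neighborSet_eq_three ha
  obtain ⟨u, rfl⟩ := doubleSubdivision.exists_eq_inl_of_card_neighborSet_eq_three hb
  exact doubleSubdivision.Walk.exists_middle_edge_mem_edges_of_base_ne p (by simpa using hab)

/-- Every path in `Ĝ` between two distinct vertices of degree `3` in
`Ĝ` contains an edge of the form `{x_{v,u}, x_{u,v}}` for some edge `{v,u} ∈ E(G)`. -/
theorem stmt_5 {V : Type*} [Fintype V] (G : SimpleGraph V)
    (a b : V ⊕ V × V) (hab : a ≠ b)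
    (ha : Nat.card ((doubleSubdivision G).neighborSet a) = 3)
    (hb : Nat.card ((doubleSubdivision G).neighborSet b) = 3)
    (p : (doubleSubdivision G).Walk a b) (hp : p.IsPath) :
    ∃ v u, G.Adj v u ∧
      s((Sum.inr (v, u) : V ⊕ V × V), (Sum.inr (u, v) : V ⊕ V × V)) ∈ p.edges :=
  stmt_5_general G a b hab ha hb p
end

section
/- Let G be a finite simple graph of maximum degree at most 3 and let Ĝ be the double subdivision of G. Then the edge set of Ĝ can be partitioned into three matchings M_1, M_2, M_3, i.e., into three sets of pairwise vertex-disjoint edges. -/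
private def mcol (a b : Fin 3) : Fin 3 :=
  if a ≠ 0 ∧ b ≠ 0 then 0 else if a ≠ 1 ∧ b ≠ 1 then 1 else 2

private lemma mcol_comm : ∀ a b : Fin 3, mcol a b = mcol b a := by decide
private lemma mcol_ne_left : ∀ a b : Fin 3, mcol a b ≠ a := by decide
private lemma mcol_ne_right : ∀ a b : Fin 3, mcol a b ≠ b := by decide

/-- If `G` is a finite simple graph of maximum degree at most `3`,
then the edge set of its double subdivision `Ĝ` can be partitioned into three
matchings `M 0, M 1, M 2`, i.e., three pairwise disjoint sets of pairwise
vertex-disjoint edges covering `E(Ĝ)`. -/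
theorem stmt_6 {V : Type*} [Fintype V] (G : SimpleGraph V)
    (hdeg : ∀ v : V, Nat.card (G.neighborSet v) ≤ 3) :
    ∃ M : Fin 3 → Set (Sym2 (V ⊕ V × V)),
      (⋃ i, M i) = (doubleSubdivision G).edgeSet ∧
      (∀ i j, i ≠ j → Disjoint (M i) (M j)) ∧
      (∀ i, ∀ e ∈ M i, ∀ f ∈ M i, e ≠ f → ∀ x : V ⊕ V × V, ¬(x ∈ e ∧ x ∈ f)) := by
  classical
  have hf : ∀ v : V, ∃ g : V → Fin 3, ∀ u ∈ G.neighborSet v, ∀ u' ∈ G.neighborSet v,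
      g u = g u' → u = u' := by
    intro v
    haveI : Fintype (G.neighborSet v) := (Set.toFinite _).fintype
    have hcard : Fintype.card (G.neighborSet v) ≤ Fintype.card (Fin 3) := by
      rw [Fintype.card_fin, ← Nat.card_eq_fintype_card]; exact hdeg v
    obtain ⟨emb⟩ := Function.Embedding.nonempty_of_card_le hcard
    refine ⟨fun u => if h : u ∈ G.neighborSet v then emb ⟨u, h⟩ else 0, ?_⟩
    intro u hu u' hu' h
    simp only [dif_pos hu, dif_pos hu'] at h
    exact Subtype.ext_iff.mp (emb.injective h)
  choose g hg using hf
  refine ⟨fun i => {e | (∃ v u, G.Adj v u ∧ e = s(Sum.inl v, Sum.inr (v, u)) ∧ g v u = i) ∨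
      (∃ v u, G.Adj v u ∧ e = s(Sum.inr (v, u), Sum.inr (u, v)) ∧
        mcol (g v u) (g u v) = i)}, ?_, ?_, ?_⟩
  · -- union is the edge set
    ext e
    simp only [Set.mem_iUnion, Set.mem_setOf_eq]
    constructor
    · rintro ⟨i, (⟨v, u, h, rfl, rfl⟩ | ⟨v, u, h, rfl, rfl⟩)⟩
      · rw [SimpleGraph.mem_edgeSet]
        exact SimpleGraph.fromRel_adj .. |>.mpr
          ⟨by simp, Or.inl (Or.inl ⟨v, u, h, rfl, rfl⟩)⟩
      · rw [SimpleGraph.mem_edgeSet]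
        refine SimpleGraph.fromRel_adj .. |>.mpr
          ⟨?_, Or.inl (Or.inr ⟨v, u, h, rfl, rfl⟩)⟩
        intro hc
        simp only [Sum.inr.injEq, Prod.mk.injEq] at hc
        exact h.ne hc.1
    · induction e using Sym2.ind with
      | _ a b =>
        intro he
        rw [SimpleGraph.mem_edgeSet] at he
        obtain ⟨-, h | h⟩ := SimpleGraph.fromRel_adj .. |>.mp he
        · rcases h with ⟨v, u, h, rfl, rfl⟩ | ⟨v, u, h, rfl, rfl⟩
          · exact ⟨g v u, Or.inl ⟨v, u, h, rfl, rfl⟩⟩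
          · exact ⟨mcol (g v u) (g u v), Or.inr ⟨v, u, h, rfl, rfl⟩⟩
        · rcases h with ⟨v, u, h, rfl, rfl⟩ | ⟨v, u, h, rfl, rfl⟩
          · exact ⟨g v u, Or.inl ⟨v, u, h, Sym2.eq_swap, rfl⟩⟩
          · exact ⟨mcol (g v u) (g u v), Or.inr ⟨v, u, h, Sym2.eq_swap, rfl⟩⟩
  · -- pairwise disjoint
    intro i j hij
    rw [Set.disjoint_left]
    rintro e (⟨v, u, h, rfl, hi⟩ | ⟨v, u, h, rfl, hi⟩)
        (⟨v', u', h', he, hj⟩ | ⟨v', u', h', he, hj⟩)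
    · rw [Sym2.eq_iff] at he
      rcases he with ⟨h1, h2⟩ | ⟨h1, h2⟩
      · simp only [Sum.inl.injEq] at h1
        simp only [Sum.inr.injEq, Prod.mk.injEq] at h2
        obtain ⟨rfl, rfl⟩ := h2
        exact hij (hi ▸ hj ▸ rfl)
      · simp at h1
    · rw [Sym2.eq_iff] at he
      rcases he with ⟨h1, h2⟩ | ⟨h1, h2⟩ <;> simp at h1
    · rw [Sym2.eq_iff] at he
      rcases he with ⟨h1, h2⟩ | ⟨h1, h2⟩
      · simp at h1
      · simp at h2
    · rw [Sym2.eq_iff] at he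
      rcases he with ⟨h1, h2⟩ | ⟨h1, h2⟩
      · simp only [Sum.inr.injEq, Prod.mk.injEq] at h1
        obtain ⟨rfl, rfl⟩ := h1
        exact hij (hi ▸ hj ▸ rfl)
      · simp only [Sum.inr.injEq, Prod.mk.injEq] at h1
        obtain ⟨rfl, rfl⟩ := h1
        exact hij (hi ▸ hj ▸ (mcol_comm ..))
  · -- each color class is a matching
    rintro i e (⟨v, u, h, rfl, hi⟩ | ⟨v, u, h, rfl, hi⟩) f
        (⟨v', u', h', rfl, hj⟩ | ⟨v', u', h', rfl, hj⟩) hef x ⟨hxe, hxf⟩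
    · -- pendant / pendant
      rw [Sym2.mem_iff] at hxe hxf
      rcases hxe with rfl | rfl <;> rcases hxf with h2 | h2
      · simp only [Sum.inl.injEq] at h2
        subst h2
        have := hg v u' ((G.mem_neighborSet _ _).mpr h') u ((G.mem_neighborSet _ _).mpr h) (hj.trans hi.symm)
        subst this
        exact hef rfl
      · simp at h2
      · simp at h2
      · simp only [Sum.inr.injEq, Prod.mk.injEq] at h2
        obtain ⟨rfl, rfl⟩ := h2
        exact hef rfl
    · -- pendant / middle
      rw [Sym2.mem_iff] at hxe hxf
      rcases hxe with rfl | rfl <;> rcases hxf with h2 | h2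
      · simp at h2
      · simp at h2
      · simp only [Sum.inr.injEq, Prod.mk.injEq] at h2
        obtain ⟨rfl, rfl⟩ := h2
        exact mcol_ne_left (g v u) (g u v) (hj.trans hi.symm)
      · simp only [Sum.inr.injEq, Prod.mk.injEq] at h2
        obtain ⟨rfl, rfl⟩ := h2
        exact mcol_ne_right (g u v) (g v u) (hj.trans hi.symm)
    · -- middle / pendant
      rw [Sym2.mem_iff] at hxe hxf
      rcases hxe with rfl | rfl <;> rcases hxf with h2 | h2
      · simp at h2
      · simp only [Sum.inr.injEq, Prod.mk.injEq] at h2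
        obtain ⟨rfl, rfl⟩ := h2
        exact mcol_ne_left (g v u) (g u v) (hi.trans hj.symm)
      · simp at h2
      · simp only [Sum.inr.injEq, Prod.mk.injEq] at h2
        obtain ⟨rfl, rfl⟩ := h2
        exact mcol_ne_right (g v u) (g u v) (hi.trans hj.symm)
    · -- middle / middle
      rw [Sym2.mem_iff] at hxe hxf
      rcases hxe with rfl | rfl <;> rcases hxf with h2 | h2 <;>
          simp only [Sum.inr.injEq, Prod.mk.injEq] at h2 <;>
          obtain ⟨rfl, rfl⟩ := h2
      · exact hef rfl
      · exact hef Sym2.eq_swap.symm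
      · exact hef Sym2.eq_swap.symm
      · exact hef rfl
end

section
/- Let H be a finite simple graph whose edge set is partitioned into three matchings M_1, M_2, M_3, let (G', col') be the associated 3-edge-colored graph, and let k ∈ ℕ. Then H has a vertex cover of size at most k if and only if (G', col') has a simultaneous feedback edge set of size at most k. -/
/-- The 3-edge-colored graph `(G', col')` associated with a graph `H` whose edge set is
partitioned into three matchings: the underlying graph `G'` on `V(H) × Bool` has, for
every `v ∈ V(H)`, the edge `{(v, false), (v, true)}` (color set `{1,2,3}`), and for
every edge `{v,u}` of `H` the edges `{(v,b),(u,b)}` for `b ∈ Bool`. -/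
def assocGraph {V : Type*} (H : SimpleGraph V) : SimpleGraph (V × Bool) :=
  SimpleGraph.fromRel fun a b =>
    (a.1 = b.1 ∧ a.2 ≠ b.2) ∨ (a.2 = b.2 ∧ H.Adj a.1 b.1)

/-- The color-`i` graph `G'_i` of the associated 3-edge-colored graph, where `M` is the
matching with color `i`: it contains all edges `{(v, false), (v, true)}` (these have
color set `{1,2,3}`) and the edges `{(v,b),(u,b)}` for `{v,u} ∈ M`. -/
def assocColorGraph {V : Type*} (H : SimpleGraph V) (M : Set (Sym2 V)) :
    SimpleGraph (V × Bool) :=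
  SimpleGraph.fromRel fun a b =>
    (a.1 = b.1 ∧ a.2 ≠ b.2) ∨ (a.2 = b.2 ∧ H.Adj a.1 b.1 ∧ s(a.1, b.1) ∈ M)

/-!
In `G'_i` with the rungs `{(v,0),(v,1)}` of a vertex cover `S` deleted, a vertex `(v,b)` has at
most one matching neighbour, and keeps its rung only if `v ∉ S`. A vertex on a cycle has two
distinct neighbours on it, so `v ∉ S` and its matching neighbour `(u,b)` lies on the cycle as
well, whence `u ∉ S` and the edge `uv` is uncovered.

Conversely, an edge `uv` of colour `i` spans the square `(u,0) (v,0) (v,1) (u,1)` in `G'_i`, so a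
simultaneous feedback edge set hits it; the `H`-coordinate of one endpoint of each deleted edge
therefore yields a vertex cover of the same size.
-/

open SimpleGraph

namespace SimpleGraph

variable {W : Type*} {G : SimpleGraph W}

lemma Walk.IsCycle.exists_adj_ne_of_mem_support {u x : W} {c : G.Walk u u} (hc : c.IsCycle)
    (hx : x ∈ c.support) :
    ∃ y z, y ≠ z ∧ G.Adj x y ∧ G.Adj x z ∧ y ∈ c.support ∧ z ∈ c.support := by
  obtain ⟨y, z, hyz, hnbr⟩ := Set.ncard_eq_two.mp (hc.ncard_neighborSet_toSubgraph_eq_two hx)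
  have hy : c.toSubgraph.Adj x y := by simp [← Subgraph.mem_neighborSet, hnbr]
  have hz : c.toSubgraph.Adj x z := by simp [← Subgraph.mem_neighborSet, hnbr]
  exact ⟨y, z, hyz, hy.adj_sub, hz.adj_sub,
    c.mem_verts_toSubgraph.mp hy.snd_mem, c.mem_verts_toSubgraph.mp hz.snd_mem⟩

lemma IsAcyclic.eq_of_adj_of_adj {a b c d : W} (hG : G.IsAcyclic) (hab : G.Adj a b)
    (hbc : G.Adj b c) (had : G.Adj a d) (hdc : G.Adj d c) (hac : a ≠ c) : b = d := by
  have hp : (Walk.cons hab (Walk.cons hbc .nil)).IsPath := by simp [hab.ne, hbc.ne, hac]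
  have hq : (Walk.cons had (Walk.cons hdc .nil)).IsPath := by simp [had.ne, hdc.ne, hac]
  have hpq := (hG.subsingleton_path a c).elim ⟨_, hp⟩ ⟨_, hq⟩
  simpa using congrArg (fun p : G.Path a c => p.1.getVert 1) hpq

end SimpleGraph

lemma eq_of_mk_mem_of_mk_mem {V : Type*} {M : Set (Sym2 V)}
    (hM : ∀ e ∈ M, ∀ f ∈ M, e ≠ f → ∀ x : V, ¬(x ∈ e ∧ x ∈ f)) {x y z : V}
    (hy : s(x, y) ∈ M) (hz : s(x, z) ∈ M) : y = z := by
  by_contra hyz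
  exact hM _ hy _ hz (mt Sym2.congr_right.mp hyz) x ⟨Sym2.mem_mk_left _ _, Sym2.mem_mk_left _ _⟩

section AssocGraph

variable {V : Type*} {H : SimpleGraph V}

def assocRung (v : V) : Sym2 (V × Bool) := s((v, false), (v, true))

lemma assocRung_mem_edgeSet_assocGraph (v : V) : assocRung v ∈ (assocGraph H).edgeSet := by
  simp [assocRung, assocGraph]

lemma assocColorGraph_adj {M : Set (Sym2 V)} {x y : V × Bool} :
    (assocColorGraph H M).Adj x y ↔
      y = (x.1, !x.2) ∨ (x.2 = y.2 ∧ H.Adj x.1 y.1 ∧ s(x.1, y.1) ∈ M) := by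
  obtain ⟨x1, x2⟩ := x
  obtain ⟨y1, y2⟩ := y
  simp only [assocColorGraph, fromRel_adj]
  cases x2 <;> cases y2 <;> grind [H.adj_symm, Sym2.eq_swap, H.ne_of_adj]

lemma mk_mem_image_assocRung_iff [DecidableEq V] {S : Finset V} {v : V} {b : Bool} :
    s((v, b), (v, !b)) ∈ S.image assocRung ↔ v ∈ S := by
  cases b <;> simp [assocRung, Sym2.eq_swap]

lemma mk_notMem_image_assocRung_of_snd_eq [DecidableEq V] {S : Finset V} {x y : V × Bool}
    (h : x.2 = y.2) : s(x, y) ∉ S.image assocRung := by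
  simp only [Finset.mem_image, assocRung, Sym2.eq_iff, not_exists, not_and]
  grind

lemma assocColorGraph_deleteEdges_assocRungs_adj [DecidableEq V] {M : Set (Sym2 V)} {S : Finset V}
    {x y : V × Bool} :
    ((assocColorGraph H M).deleteEdges (S.image assocRung)).Adj x y ↔
      (y = (x.1, !x.2) ∧ x.1 ∉ S) ∨ (x.2 = y.2 ∧ H.Adj x.1 y.1 ∧ s(x.1, y.1) ∈ M) := by
  rw [deleteEdges_adj, assocColorGraph_adj]
  constructor
  · rintro ⟨rfl | hxy, hS⟩
    · exact Or.inl ⟨rfl, mt mk_mem_image_assocRung_iff.mpr hS⟩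
    · exact Or.inr hxy
  · rintro (⟨rfl, hS⟩ | ⟨hxy, hH, hM⟩)
    · exact ⟨Or.inl rfl, mt mk_mem_image_assocRung_iff.mp hS⟩
    · exact ⟨Or.inr ⟨hxy, hH, hM⟩, mk_notMem_image_assocRung_of_snd_eq hxy⟩

lemma isAcyclic_assocColorGraph_deleteEdges_assocRungs [DecidableEq V] {M : Set (Sym2 V)}
    (hM : ∀ e ∈ M, ∀ f ∈ M, e ≠ f → ∀ x : V, ¬(x ∈ e ∧ x ∈ f)) {S : Finset V}
    (hS : ∀ ⦃a b : V⦄, H.Adj a b → a ∈ S ∨ b ∈ S) :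
    ((assocColorGraph H M).deleteEdges (S.image assocRung)).IsAcyclic := by
  intro u c hc
  have hcycle : ∀ w ∈ c.support, w.1 ∉ S ∧ ∃ v ∈ c.support, H.Adj w.1 v.1 := by
    intro w hw
    obtain ⟨y, z, hyz, hy, hz, hyc, hzc⟩ := hc.exists_adj_ne_of_mem_support hw
    rw [assocColorGraph_deleteEdges_assocRungs_adj] at hy hz
    rcases hy with ⟨rfl, hwS⟩ | ⟨hy2, hyH, hyM⟩ <;>
      rcases hz with ⟨rfl, hwS⟩ | ⟨hz2, hzH, hzM⟩
    · exact absurd rfl hyz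
    · exact ⟨hwS, z, hzc, hzH⟩
    · exact ⟨hwS, y, hyc, hyH⟩
    · exact absurd (Prod.ext (eq_of_mk_mem_of_mk_mem hM hyM hzM) (hy2.symm.trans hz2)) hyz
  obtain ⟨hu, v, hv, huv⟩ := hcycle u c.start_mem_support
  exact (hS huv).elim hu (hcycle v hv).1

lemma isVertexCover_image_of_forall_isAcyclic [DecidableEq V] {ι : Type*}
    {M : ι → Set (Sym2 V)} (hpart : (⋃ i, M i) = H.edgeSet) {S : Finset (Sym2 (V × Bool))}
    (hS : ∀ i, ((assocColorGraph H (M i)).deleteEdges S).IsAcyclic)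
    ⦃a b : V⦄ (hab : H.Adj a b) :
    a ∈ S.image (fun e => e.out.1.1) ∨ b ∈ S.image (fun e => e.out.1.1) := by
  obtain ⟨i, hi⟩ := Set.mem_iUnion.mp (hpart ▸ hab : s(a, b) ∈ ⋃ i, M i)
  by_contra! huncovered
  have hK : ∀ p q : V × Bool, (p.1 = a ∨ p.1 = b) → (q.1 = a ∨ q.1 = b) →
      (assocColorGraph H (M i)).Adj p q → ((assocColorGraph H (M i)).deleteEdges S).Adj p q := by
    refine fun p q hp hq hpq => deleteEdges_adj.mpr ⟨hpq, fun hpqS => ?_⟩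
    have hmem := Finset.mem_image_of_mem (fun e : Sym2 (V × Bool) => e.out.1.1) hpqS
    rcases Sym2.mem_iff.mp (Sym2.out_fst_mem s(p, q)) with h | h <;> simp only [h] at hmem <;>
      grind
  have hedge (β : Bool) : (assocColorGraph H (M i)).Adj (a, β) (b, β) :=
    assocColorGraph_adj.mpr (.inr ⟨rfl, hab, hi⟩)
  have hrung (v : V) : (assocColorGraph H (M i)).Adj (v, false) (v, true) :=
    assocColorGraph_adj.mpr (.inl rfl)
  have hsquare := (hS i).eq_of_adj_of_adj
    (hK (a, false) (b, false) (.inl rfl) (.inr rfl) (hedge false))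
    (hK (b, false) (b, true) (.inr rfl) (.inr rfl) (hrung b))
    (hK (a, false) (a, true) (.inl rfl) (.inl rfl) (hrung a))
    (hK (a, true) (b, true) (.inl rfl) (.inr rfl) (hedge true))
    (by simp)
  simp at hsquare

end AssocGraph

theorem stmt_7_general {V : Type*} (H : SimpleGraph V)
    (M : Fin 3 → Set (Sym2 V))
    (hpart : (⋃ i, M i) = H.edgeSet)
    (hmatch : ∀ i, ∀ e ∈ M i, ∀ f ∈ M i, e ≠ f → ∀ x : V, ¬(x ∈ e ∧ x ∈ f))
    (k : ℕ) :
    (∃ S : Finset V, S.card ≤ k ∧ ∀ ⦃a b : V⦄, H.Adj a b → a ∈ S ∨ b ∈ S) ↔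
    (∃ S : Finset (Sym2 (V × Bool)), S.card ≤ k ∧
      (S : Set (Sym2 (V × Bool))) ⊆ (assocGraph H).edgeSet ∧
      ∀ i : Fin 3,
        ((assocColorGraph H (M i)).deleteEdges (S : Set (Sym2 (V × Bool)))).IsAcyclic) := by
  classical
  constructor
  · rintro ⟨S, hcard, hcover⟩
    refine ⟨S.image assocRung, Finset.card_image_le.trans hcard, ?_,
      fun i => isAcyclic_assocColorGraph_deleteEdges_assocRungs (hmatch i) hcover⟩
    simpa [Set.subset_def] using fun v _ => assocRung_mem_edgeSet_assocGraph v
  · rintro ⟨S, hcard, -, hacyc⟩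
    exact ⟨_, Finset.card_image_le.trans hcard,
      isVertexCover_image_of_forall_isAcyclic hpart hacyc⟩

/-- Let `H` be a finite simple graph whose edge set is partitioned
into three matchings `M 0, M 1, M 2`, let `(G', col')` be the associated 3-edge-colored
graph, and let `k ∈ ℕ`. Then `H` has a vertex cover of size at most `k` iff
`(G', col')` has a simultaneous feedback edge set of size at most `k`. -/
theorem stmt_7 {V : Type*} [Fintype V] [DecidableEq V] (H : SimpleGraph V)
    (M : Fin 3 → Set (Sym2 V))
    (hpart : (⋃ i, M i) = H.edgeSet)
    (hdisj : ∀ i j, i ≠ j → Disjoint (M i) (M j))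
    (hmatch : ∀ i, ∀ e ∈ M i, ∀ f ∈ M i, e ≠ f → ∀ x : V, ¬(x ∈ e ∧ x ∈ f))
    (k : ℕ) :
    (∃ S : Finset V, S.card ≤ k ∧ ∀ ⦃a b : V⦄, H.Adj a b → a ∈ S ∨ b ∈ S) ↔
    (∃ S : Finset (Sym2 (V × Bool)), S.card ≤ k ∧
      (S : Set (Sym2 (V × Bool))) ⊆ (assocGraph H).edgeSet ∧
      ∀ i : Fin 3,
        ((assocColorGraph H (M i)).deleteEdges (S : Set (Sym2 (V × Bool)))).IsAcyclic) :=
  stmt_7_general H M hpart hmatch k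
end

section
/- Let H be a finite simple graph whose edge set is partitioned into three matchings M_1, M_2, M_3, and let (G', col') be the associated 3-edge-colored graph. For each i ∈ {1,2,3}, a set of vertices of G' is the vertex set of a cycle of G'_i if and only if it equals {(v,0),(v,1),(u,0),(u,1)} for some edge {v,u} ∈ M_i; in particular every monochromatic cycle of G' is a 4-cycle of the form (v,0)–(v,1)–(u,1)–(u,0)–(v,0) with {v,u} ∈ E(H). -/
namespace Stmt8Aux
open SimpleGraph

variable {V : Type*} [DecidableEq V] {H : SimpleGraph V} {N : Set (Sym2 V)}

lemma acg_adj {a b : V × Bool} :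
    (assocColorGraph H N).Adj a b ↔
      (a.1 = b.1 ∧ a.2 ≠ b.2) ∨ (a.2 = b.2 ∧ H.Adj a.1 b.1 ∧ s(a.1, b.1) ∈ N) := by
  rw [assocColorGraph, fromRel_adj]
  constructor
  · rintro ⟨hne, h | h⟩
    · exact h
    · rcases h with ⟨h1, h2⟩ | ⟨h1, h2, h3⟩
      · exact Or.inl ⟨h1.symm, h2.symm⟩
      · exact Or.inr ⟨h1.symm, h2.symm, Sym2.eq_swap ▸ h3⟩
  · intro h
    refine ⟨?_, Or.inl h⟩
    rcases h with ⟨h1, h2⟩ | ⟨h1, h2, h3⟩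
    · exact fun he => h2 (congrArg Prod.snd he)
    · exact fun he => H.ne_of_adj h2 (congrArg Prod.fst he)

lemma partner_unique
    (hm : ∀ e ∈ N, ∀ f ∈ N, e ≠ f → ∀ x : V, ¬(x ∈ e ∧ x ∈ f))
    {v u w : V} (h1 : s(v, u) ∈ N) (h2 : s(v, w) ∈ N) : u = w := by
  by_contra hne
  by_cases hef : s(v, u) = s(v, w)
  · rw [Sym2.eq_iff] at hef
    rcases hef with ⟨_, h⟩ | ⟨h1', h2'⟩
    · exact hne h
    · exact hne (h2'.trans h1')
  · exact hm _ h1 _ h2 hef v ⟨by simp, by simp⟩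

lemma support_first
    (hm : ∀ e ∈ N, ∀ f ∈ N, e ≠ f → ∀ x : V, ¬(x ∈ e ∧ x ∈ f))
    {x y : V × Bool} (p : (assocColorGraph H N).Walk x y) :
    ∀ z ∈ p.support, z.1 = x.1 ∨ s(x.1, z.1) ∈ N := by
  induction p with
  | nil => intro z hz; simp only [Walk.support_nil, List.mem_singleton] at hz; subst hz; exact Or.inl rfl
  | @cons x b y h q ih =>
    intro z hz
    rw [Walk.support_cons, List.mem_cons] at hz
    rcases hz with rfl | hz
    · exact Or.inl rfl
    · rcases acg_adj.mp h with ⟨hb, _⟩ | ⟨_, _, hbm⟩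
      · rcases ih z hz with h' | h'
        · exact Or.inl (h'.trans hb.symm)
        · exact Or.inr (hb ▸ h')
      · rcases ih z hz with h' | h'
        · exact Or.inr (h' ▸ hbm)
        · left
          exact (partner_unique hm (Sym2.eq_swap ▸ hbm) h').symm

lemma parity {a u : V} (hau : a ≠ u) {x y : V × Bool}
    (p : (assocColorGraph H N).Walk x y)
    (hsupp : ∀ z ∈ p.support, z.1 = a ∨ z.1 = u) :
    ((x.2 ^^ decide (x.1 = u)) = (y.2 ^^ decide (y.1 = u)) ↔ Even p.length) := by
  induction p with
  | nil => simp
  | @cons x b y h q ih =>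
    have hsx : x.1 = a ∨ x.1 = u := hsupp x (by simp)
    have hsb : b.1 = a ∨ b.1 = u := hsupp b (by simp [Walk.support_cons])
    have hflip : (x.2 ^^ decide (x.1 = u)) = !(b.2 ^^ decide (b.1 = u)) := by
      rcases acg_adj.mp h with ⟨h1, h2⟩ | ⟨h1, h2, _⟩
      · have : b.2 = !x.2 := by
          cases hx2 : x.2 <;> cases hb2 : b.2 <;> simp_all
        rw [h1, this]
        cases x.2 <;> cases decide (b.1 = u) <;> simp
      · have hne : x.1 ≠ b.1 := H.ne_of_adj h2
        have : decide (x.1 = u) = !decide (b.1 = u) := by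
          rcases hsx with rfl | rfl <;> rcases hsb with h' | h' <;> simp_all
        rw [h1, this]
        cases b.2 <;> cases decide (b.1 = u) <;> simp
    have ih' := ih (fun z hz => hsupp z (by simp [Walk.support_cons, hz]))
    rw [Walk.length_cons, Nat.even_add_one, ← ih', hflip]
    cases b.2 ^^ decide (b.1 = u) <;> cases y.2 ^^ decide (y.1 = u) <;> simp

lemma cycle_struct (hsub : N ⊆ H.edgeSet)
    (hm : ∀ e ∈ N, ∀ f ∈ N, e ≠ f → ∀ x : V, ¬(x ∈ e ∧ x ∈ f))
    {a : V × Bool} (p : (assocColorGraph H N).Walk a a) (hp : p.IsCycle) :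
    ∃ u, H.Adj a.1 u ∧ s(a.1, u) ∈ N ∧ p.length = 4 ∧
      {x | x ∈ p.support} = {(a.1, false), (a.1, true), (u, false), (u, true)} := by
  have hlen3 : 3 ≤ p.length := hp.three_le_length
  have hnd : p.support.tail.Nodup := ((Walk.isCycle_def p).mp hp).2.2
  have htl : p.support.tail.length = p.length := by
    have := p.length_support
    rw [List.length_tail, this]; omega
  have hsupp := support_first hm p
  by_cases hex : ∃ u, s(a.1, u) ∈ N
  · obtain ⟨u, hu⟩ := hex
    have hadj : H.Adj a.1 u := (H.mem_edgeSet).mp (hsub hu)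
    have hne : a.1 ≠ u := hadj.ne
    have hsupp2 : ∀ z ∈ p.support, z.1 = a.1 ∨ z.1 = u := by
      intro z hz
      rcases hsupp z hz with h | h
      · exact Or.inl h
      · exact Or.inr (partner_unique hm hu h).symm
    set C : Finset (V × Bool) := {(a.1, false), (a.1, true), (u, false), (u, true)} with hCdef
    have hC : C.card = 4 := by
      rw [hCdef, Finset.card_insert_of_notMem (by simp [Prod.ext_iff, hne]),
        Finset.card_insert_of_notMem (by simp [Prod.ext_iff, hne]),
        Finset.card_insert_of_notMem (by simp), Finset.card_singleton]
    have hmemC : ∀ z ∈ p.support, z ∈ C := by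
      intro z hz
      obtain ⟨z1, z2⟩ := z
      rcases hsupp2 _ hz with h | h <;> dsimp at h <;> subst h <;>
        cases z2 <;> simp [hCdef]
    have hsubC : p.support.tail.toFinset ⊆ C := by
      intro z hz
      rw [List.mem_toFinset] at hz
      exact hmemC z (List.mem_of_mem_tail hz)
    have hle4 : p.length ≤ 4 := by
      have h1 : p.support.tail.toFinset.card ≤ 4 := hC ▸ Finset.card_le_card hsubC
      rw [List.toFinset_card_of_nodup hnd, htl] at h1
      exact h1
    have heven : Even p.length := (parity hne p hsupp2).mp rfl
    have hlen : p.length = 4 := by rcases heven with ⟨k, hk⟩; omega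
    have heq : p.support.tail.toFinset = C := by
      refine Finset.eq_of_subset_of_card_le hsubC ?_
      rw [List.toFinset_card_of_nodup hnd, htl, hlen, hC]
    refine ⟨u, hadj, hu, hlen, ?_⟩
    ext z
    simp only [Set.mem_setOf_eq, Set.mem_insert_iff, Set.mem_singleton_iff]
    constructor
    · intro hz
      have := hmemC z hz
      simpa [hCdef, Finset.mem_insert, Finset.mem_singleton] using this
    · intro hz
      have hzC : z ∈ C := by
        simp only [hCdef, Finset.mem_insert, Finset.mem_singleton]
        tauto
      rw [← heq, List.mem_toFinset] at hzC
      exact List.mem_of_mem_tail hzC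
  · exfalso
    have hall : ∀ z ∈ p.support, z.1 = a.1 := fun z hz =>
      (hsupp z hz).resolve_right (fun h => hex ⟨z.1, h⟩)
    have hsubF : p.support.tail.toFinset ⊆ {(a.1, false), (a.1, true)} := by
      intro z hz
      rw [List.mem_toFinset] at hz
      have h := hall z (List.mem_of_mem_tail hz)
      obtain ⟨z1, z2⟩ := z
      dsimp at h; subst h
      cases z2 <;> simp
    have h1 : p.support.tail.toFinset.card ≤ 2 := by
      refine le_trans (Finset.card_le_card hsubF) ?_
      refine le_trans (Finset.card_insert_le _ _) ?_
      simp
    rw [List.toFinset_card_of_nodup hnd, htl] at h1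
    omega

lemma exists_cycle {v u : V} (hadj : H.Adj v u) (hu : s(v, u) ∈ N) :
    ∃ p : (assocColorGraph H N).Walk (v, false) (v, false), p.IsCycle ∧
      {x | x ∈ p.support} = {(v, false), (v, true), (u, false), (u, true)} := by
  have hne : v ≠ u := hadj.ne
  have h1 : (assocColorGraph H N).Adj (v, false) (v, true) :=
    acg_adj.mpr (Or.inl ⟨rfl, by simp⟩)
  have h2 : (assocColorGraph H N).Adj (v, true) (u, true) :=
    acg_adj.mpr (Or.inr ⟨rfl, hadj, hu⟩)
  have h3 : (assocColorGraph H N).Adj (u, true) (u, false) :=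
    acg_adj.mpr (Or.inl ⟨rfl, by simp⟩)
  have h4 : (assocColorGraph H N).Adj (u, false) (v, false) :=
    acg_adj.mpr (Or.inr ⟨rfl, hadj.symm, by rwa [Sym2.eq_swap]⟩)
  refine ⟨Walk.cons h1 (Walk.cons h2 (Walk.cons h3 (Walk.cons h4 Walk.nil))), ?_, ?_⟩
  · rw [Walk.isCycle_def]
    refine ⟨?_, by simp, ?_⟩
    · rw [Walk.isTrail_def]
      simp [Walk.edges_cons, Sym2.eq_iff, Prod.ext_iff, hne, hne.symm]
    · simp [Prod.ext_iff, hne, hne.symm]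
  · ext z
    simp only [Walk.support_cons, Walk.support_nil, List.mem_cons, List.mem_singleton,
      Set.mem_setOf_eq, Set.mem_insert_iff, Set.mem_singleton_iff]
    tauto

end Stmt8Aux

/-- With `H` a finite simple graph whose edge set is partitioned into
three matchings `M 0, M 1, M 2` and `(G', col')` the associated 3-edge-colored graph:
for each `i`, a set of vertices of `G'` is the vertex set of a cycle of `G'_i` iff it
equals `{(v,false),(v,true),(u,false),(u,true)}` for some edge `{v,u} ∈ M i`; in
particular every monochromatic cycle of `G'` is a 4-cycle of this form. -/
theorem stmt_8 {V : Type*} [Fintype V] [DecidableEq V] (H : SimpleGraph V)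
    (M : Fin 3 → Set (Sym2 V))
    (hpart : (⋃ i, M i) = H.edgeSet)
    (hdisj : ∀ i j, i ≠ j → Disjoint (M i) (M j))
    (hmatch : ∀ i, ∀ e ∈ M i, ∀ f ∈ M i, e ≠ f → ∀ x : V, ¬(x ∈ e ∧ x ∈ f)) :
    ∀ i : Fin 3,
      (∀ T : Set (V × Bool),
        (∃ (a : V × Bool) (p : (assocColorGraph H (M i)).Walk a a),
            p.IsCycle ∧ T = {x | x ∈ p.support}) ↔
        (∃ v u : V, H.Adj v u ∧ s(v, u) ∈ M i ∧
            T = {(v, false), (v, true), (u, false), (u, true)})) ∧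
      (∀ (a : V × Bool) (p : (assocColorGraph H (M i)).Walk a a),
          p.IsCycle → p.length = 4) := by

  intro i
  have hsub : M i ⊆ H.edgeSet := by rw [← hpart]; exact Set.subset_iUnion M i
  have hm := hmatch i
  constructor
  · intro T
    constructor
    · rintro ⟨a, p, hp, rfl⟩
      obtain ⟨u, hadj, hu, _, hsupp⟩ := Stmt8Aux.cycle_struct hsub hm p hp
      exact ⟨a.1, u, hadj, hu, hsupp⟩
    · rintro ⟨v, u, hadj, hu, rfl⟩
      obtain ⟨p, hp, hs⟩ := Stmt8Aux.exists_cycle hadj hu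
      exact ⟨(v, false), p, hp, hs.symm⟩
  · intro a p hp
    obtain ⟨u, _, _, hlen, _⟩ := Stmt8Aux.cycle_struct hsub hm p hp
    exact hlen
end

section
/- Let n, α, k ∈ ℕ, let U = {1,…,n}, and let F_1,…,F_α ⊆ U with |F_t| ≥ 2 for every t ∈ {1,…,α}. Let (G, col) be the α-edge-colored graph associated with this Hitting Set instance. Then there exists a set S ⊆ U with |S| ≤ k and S ∩ F_t ≠ ∅ for every t ∈ {1,…,α} if and only if (G, col) has a simultaneous feedback edge set of size at most k. -/
/-!
For each colour `t`, the non-isolated vertices of `G_t` form a single cycle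
`v i₁ w i₁ s v i₂ w i₂ s ⋯ v i₁` running through the elements of `F t` in cyclic order.

Given a hitting set `S`, delete the edges `v x w x` for `x ∈ S`. For each `t` this cuts the
cycle of `G_t` open at some `x ∈ F t`, leaving a path; it is acyclic because its vertices can
be given distinct levels such that every edge joins two vertices consecutive among the levels.

Conversely, a simultaneous feedback edge set must meet the cycle of every `G_t`. Every vertex
of `G_t` carries an index in `F t`, so choosing one endpoint index per deleted edge gives a
hitting set of no larger size.
-/

/-- An ordered pair `(i, j)` of elements of the set `F` is *consecutive* if either
`i < j` and `F` contains no element strictly between `i` and `j`, or `i = max F` and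
`j = min F`. -/
def consecPair {n : ℕ} (F : Finset (Fin n)) (i j : Fin n) : Prop :=
  (i ∈ F ∧ j ∈ F ∧ i < j ∧ ∀ l ∈ F, ¬(i < l ∧ l < j)) ∨
  (i ∈ F ∧ j ∈ F ∧ (∀ l ∈ F, l ≤ i) ∧ (∀ l ∈ F, j ≤ l))

/-- The underlying graph `G` of the `α`-edge-colored graph associated with a Hitting
Set instance `F : Fin α → Finset (Fin n)`.  The vertices `v i`, `w i` are
`Sum.inl (i, false)`, `Sum.inl (i, true)`, and `s_{i,j,t}` is `Sum.inr (i, j, t)`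
(isolated unless `(i, j)` is `t`-consecutive).  Edges: `{v i, w i}` for each `i`, and
`{w i, s_{i,j,t}}`, `{s_{i,j,t}, v j}` for each `t`-consecutive pair `(i, j)`. -/
def hsGraph (n α : ℕ) (F : Fin α → Finset (Fin n)) :
    SimpleGraph ((Fin n × Bool) ⊕ (Fin n × Fin n × Fin α)) :=
  SimpleGraph.fromRel fun a b =>
    (∃ i : Fin n, a = Sum.inl (i, false) ∧ b = Sum.inl (i, true)) ∨
    (∃ (i j : Fin n) (t : Fin α), consecPair (F t) i j ∧
        a = Sum.inl (i, true) ∧ b = Sum.inr (i, j, t)) ∨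
    (∃ (i j : Fin n) (t : Fin α), consecPair (F t) i j ∧
        a = Sum.inr (i, j, t) ∧ b = Sum.inl (j, false))

/-- The color-`t` graph `G_t` of the associated `α`-edge-colored graph: the edge
`{v i, w i}` has color set `{t : i ∈ F t}`, and the edges `{w i, s_{i,j,t}}`,
`{s_{i,j,t}, v j}` have color set `{t}`. -/
def hsColorGraph (n α : ℕ) (F : Fin α → Finset (Fin n)) (t : Fin α) :
    SimpleGraph ((Fin n × Bool) ⊕ (Fin n × Fin n × Fin α)) :=
  SimpleGraph.fromRel fun a b =>
    (∃ i : Fin n, i ∈ F t ∧ a = Sum.inl (i, false) ∧ b = Sum.inl (i, true)) ∨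
    (∃ i j : Fin n, consecPair (F t) i j ∧
        a = Sum.inl (i, true) ∧ b = Sum.inr (i, j, t)) ∨
    (∃ i j : Fin n, consecPair (F t) i j ∧
        a = Sum.inr (i, j, t) ∧ b = Sum.inl (j, false))

namespace SimpleGraph

variable {V : Type*} {G : SimpleGraph V}

/-- Such a graph is a subgraph of the path through its support in the order given by `f`. -/
theorem isAcyclic_of_injOn_support {β : Type*} [LinearOrder β] (f : V → β)
    (hinj : Set.InjOn f G.support)
    (hgap : ∀ ⦃u v w⦄, G.Adj u v → w ∈ G.support → ¬(f u < f w ∧ f w < f v)) :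
    G.IsAcyclic := by
  suffices key : ∀ ⦃u v⦄, G.Adj u v → f u < f v → G.IsBridge s(u, v) by
    refine isAcyclic_iff_forall_adj_isBridge.mpr fun u v huv => ?_
    rcases lt_or_gt_of_ne fun h => huv.ne (hinj huv.mem_support_left huv.mem_support_right h)
      with h | h
    · exact key huv h
    · exact Sym2.eq_swap ▸ key huv.symm h
  intro u v huv hlt
  -- No edge other than `uv` leaves the set `{w | f w ≤ f u}`.
  have below : ∀ w, Relation.ReflTransGen (G.deleteEdges {s(u, v)}).Adj u w → f w ≤ f u := by
    intro w hw
    induction hw with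
    | refl => exact le_rfl
    | @tail a b _ hab ih =>
      obtain ⟨hG, hne⟩ := deleteEdges_adj.mp hab
      by_contra! hb
      have ha : f a = f u :=
        le_antisymm ih (not_lt.mp fun h => hgap hG huv.mem_support_left ⟨h, hb⟩)
      obtain rfl := hinj hG.mem_support_left huv.mem_support_left ha
      have hv : f b = f v := le_antisymm
        (not_lt.mp fun h => hgap hG huv.mem_support_right ⟨hlt, h⟩)
        (not_lt.mp fun h => hgap huv hG.mem_support_right ⟨hb, h⟩)
      obtain rfl := hinj hG.mem_support_right huv.mem_support_right hv
      exact hne rfl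
  exact fun h => lt_irrefl _ (hlt.trans_le (below v ((reachable_iff_reflTransGen _ _).mp h)))

theorem exists_mem_edgeSet_of_isAcyclic_deleteEdges {s : Set (Sym2 V)} (hG : ¬G.IsAcyclic)
    (hs : (G.deleteEdges s).IsAcyclic) : ∃ e ∈ s, e ∈ G.edgeSet := by
  by_contra! h
  exact hG (deleteEdges_eq_self.mpr (Set.disjoint_right.mpr h) ▸ hs)

end SimpleGraph

section CyclicOrder

variable {n : ℕ}

/-- Position of `l` in the cyclic order of `Fin n` that starts at `x`. -/
def cyclicOffset (x l : Fin n) : ℕ := if x ≤ l then l - x else l + n - x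

theorem cyclicOffset_lt (x l : Fin n) : cyclicOffset x l < n := by
  have := l.isLt; unfold cyclicOffset; split_ifs <;> omega

theorem cyclicOffset_injective (x : Fin n) : Function.Injective (cyclicOffset x) := by
  intro a b h
  have := a.isLt; have := b.isLt
  unfold cyclicOffset at h
  split_ifs at h <;> omega

namespace consecPair

variable {F : Finset (Fin n)} {i j x : Fin n}

theorem mem_left (h : consecPair F i j) : i ∈ F := by
  rcases h with ⟨h, -⟩ | ⟨h, -⟩ <;> exact h

theorem mem_right (h : consecPair F i j) : j ∈ F := by
  rcases h with ⟨-, h, -⟩ | ⟨-, h, -⟩ <;> exact h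

theorem right_unique {j' : Fin n} (h : consecPair F i j) (h' : consecPair F i j') : j = j' := by
  rcases h with ⟨-, hj, hij, hbet⟩ | ⟨-, hj, hmax, hmin⟩ <;>
    rcases h' with ⟨-, hj', hij', hbet'⟩ | ⟨-, hj', hmax', hmin'⟩
  · rcases lt_trichotomy j j' with h | h | h
    · exact absurd ⟨hij, h⟩ (hbet' j hj)
    · exact h
    · exact absurd ⟨hij', h⟩ (hbet j' hj')
  · exact absurd (hmax' j hj) (not_le.mpr hij)
  · exact absurd (hmax j' hj') (not_le.mpr hij')
  · exact le_antisymm (hmin j' hj') (hmin' j hj)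

theorem cyclicOffset_lt_and_not_between (hx : x ∈ F) (h : consecPair F i j) (hj : j ≠ x) :
    cyclicOffset x i < cyclicOffset x j ∧
      ∀ l ∈ F, ¬(cyclicOffset x i < cyclicOffset x l ∧ cyclicOffset x l < cyclicOffset x j) := by
  have := i.isLt; have := j.isLt; have := x.isLt
  have hjx : (j : ℕ) ≠ x := Fin.val_ne_of_ne hj
  rcases h with ⟨-, -, hij, hbet⟩ | ⟨-, -, hmax, hmin⟩
  · have hij : (i : ℕ) < j := hij
    have hxb : ¬((i : ℕ) < x ∧ (x : ℕ) < j) := fun h => hbet x hx h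
    refine ⟨by unfold cyclicOffset; split_ifs <;> omega, fun l hl hil => ?_⟩
    have := l.isLt
    have hlb : ¬((i : ℕ) < l ∧ (l : ℕ) < j) := fun h => hbet l hl h
    unfold cyclicOffset at hil; split_ifs at hil <;> omega
  · have hxi : (x : ℕ) ≤ i := hmax x hx
    have hjx' : (j : ℕ) ≤ x := hmin x hx
    refine ⟨by unfold cyclicOffset; split_ifs <;> omega, fun l hl hil => ?_⟩
    have := l.isLt
    have hli : (l : ℕ) ≤ i := hmax l hl
    have hjl : (j : ℕ) ≤ l := hmin l hl
    unfold cyclicOffset at hil; split_ifs at hil <;> omega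

theorem cyclicOffset_le_of_right_eq (h : consecPair F i x) {l : Fin n} (hl : l ∈ F) :
    cyclicOffset x l ≤ cyclicOffset x i := by
  have := i.isLt; have := l.isLt
  rcases h with ⟨-, -, hix, hbet⟩ | ⟨-, -, hmax, hmin⟩
  · have hix : (i : ℕ) < x := hix
    have hlb : ¬((i : ℕ) < l ∧ (l : ℕ) < x) := fun h => hbet l hl h
    unfold cyclicOffset; split_ifs <;> omega
  · have hli : (l : ℕ) ≤ i := hmax l hl
    have hxl : (x : ℕ) ≤ l := hmin l hl
    unfold cyclicOffset; split_ifs <;> omega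

end consecPair

theorem exists_consecPair_left {F : Finset (Fin n)} {j : Fin n} (hj : j ∈ F) :
    ∃ i, consecPair F i j := by
  by_cases hlt : (F.filter (· < j)).Nonempty
  · obtain ⟨hi, hij⟩ := Finset.mem_filter.mp ((F.filter (· < j)).max'_mem hlt)
    refine ⟨_, Or.inl ⟨hi, hj, hij, fun l hl hl' => ?_⟩⟩
    exact not_le.mpr hl'.1 ((F.filter (· < j)).le_max' l (Finset.mem_filter.mpr ⟨hl, hl'.2⟩))
  · refine ⟨F.max' ⟨j, hj⟩, Or.inr ⟨F.max'_mem _, hj, fun l hl => F.le_max' l hl,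
      fun l hl => not_lt.mp fun hlj => hlt ⟨l, Finset.mem_filter.mpr ⟨hl, hlj⟩⟩⟩⟩

end CyclicOrder

section HittingSetGraph

open SimpleGraph

variable {n α : ℕ} {F : Fin α → Finset (Fin n)} {t : Fin α}

abbrev HSVertex (n α : ℕ) := (Fin n × Bool) ⊕ (Fin n × Fin n × Fin α)

theorem hsGraph_adj_v_w (i : Fin n) :
    (hsGraph n α F).Adj (.inl (i, false)) (.inl (i, true)) :=
  (fromRel_adj _ _ _).mpr ⟨by simp, .inl (.inl ⟨i, rfl, rfl⟩)⟩

theorem hsColorGraph_adj_v_w {i : Fin n} (hi : i ∈ F t) :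
    (hsColorGraph n α F t).Adj (.inl (i, false)) (.inl (i, true)) :=
  (fromRel_adj _ _ _).mpr ⟨by simp, .inl (.inl ⟨i, hi, rfl, rfl⟩)⟩

theorem hsColorGraph_adj_w_s {i j : Fin n} (h : consecPair (F t) i j) :
    (hsColorGraph n α F t).Adj (.inl (i, true)) (.inr (i, j, t)) :=
  (fromRel_adj _ _ _).mpr ⟨by simp, .inl (.inr (.inl ⟨i, j, h, rfl, rfl⟩))⟩

theorem hsColorGraph_adj_s_v {i j : Fin n} (h : consecPair (F t) i j) :
    (hsColorGraph n α F t).Adj (.inr (i, j, t)) (.inl (j, false)) :=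
  (fromRel_adj _ _ _).mpr ⟨by simp, .inl (.inr (.inr ⟨i, j, h, rfl, rfl⟩))⟩

theorem mem_support_hsColorGraph {u : HSVertex n α} (hu : u ∈ (hsColorGraph n α F t).support) :
    (∃ i ∈ F t, u = .inl (i, false)) ∨ (∃ i ∈ F t, u = .inl (i, true)) ∨
      ∃ i j, consecPair (F t) i j ∧ u = .inr (i, j, t) := by
  obtain ⟨b, hub⟩ := (hsColorGraph n α F t).mem_support.mp hu
  rcases ((fromRel_adj _ _ _).mp hub).2 with
    (⟨i, hi, rfl, -⟩ | ⟨i, j, hc, rfl, -⟩ | ⟨i, j, hc, rfl, -⟩) |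
    (⟨i, hi, -, rfl⟩ | ⟨i, j, hc, -, rfl⟩ | ⟨i, j, hc, -, rfl⟩)
  exacts [.inl ⟨i, hi, rfl⟩, .inr (.inl ⟨i, hc.mem_left, rfl⟩), .inr (.inr ⟨i, j, hc, rfl⟩),
    .inr (.inl ⟨i, hi, rfl⟩), .inr (.inr ⟨i, j, hc, rfl⟩), .inl ⟨j, hc.mem_right, rfl⟩]

/-- Cutting the colour-`t` cycle open at the edge `v x w x` leaves a path along which the
vertices `v i, w i, s_{i,j,t}` appear in increasing order of this level, starting at `w x`
and ending at `v x`. -/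
def cycleLevel (x : Fin n) : HSVertex n α → ℕ
  | .inl (i, false) => if i = x then 3 * n else 3 * cyclicOffset x i
  | .inl (i, true) => 3 * cyclicOffset x i + 1
  | .inr (i, _, _) => 3 * cyclicOffset x i + 2

theorem cycleLevel_injOn (x : Fin n) :
    Set.InjOn (cycleLevel x) (hsColorGraph n α F t).support := by
  intro u hu u' hu' h
  rcases mem_support_hsColorGraph hu with ⟨i, -, rfl⟩ | ⟨i, -, rfl⟩ | ⟨i, j, hc, rfl⟩ <;>
    rcases mem_support_hsColorGraph hu' with ⟨i', -, rfl⟩ | ⟨i', -, rfl⟩ | ⟨i', j', hc', rfl⟩ <;>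
    have := cyclicOffset_lt x i <;> have := cyclicOffset_lt x i' <;>
    simp only [cycleLevel] at h <;> (try split_ifs at h) <;> try omega
  all_goals first
    | subst_vars; rfl
    | obtain rfl : i = i' := cyclicOffset_injective x (by omega)
      first | rfl | rw [hc.right_unique hc']

theorem cycleLevel_not_between {x : Fin n} (hx : x ∈ F t) {u v w : HSVertex n α}
    (huv : (hsColorGraph n α F t).Adj u v)
    (hne : s(u, v) ≠ s(.inl (x, false), .inl (x, true)))
    (hw : w ∈ (hsColorGraph n α F t).support) :
    ¬(cycleLevel x u < cycleLevel x w ∧ cycleLevel x w < cycleLevel x v) := by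
  obtain ⟨l, hl, hwl⟩ : ∃ l ∈ F t,
      cycleLevel x w = cycleLevel x (.inl (l, false) : HSVertex n α) ∨
        3 * cyclicOffset x l < cycleLevel x w ∧ cycleLevel x w ≤ 3 * cyclicOffset x l + 2 := by
    rcases mem_support_hsColorGraph hw with ⟨l, hl, rfl⟩ | ⟨l, hl, rfl⟩ | ⟨l, j, hc, rfl⟩
    exacts [⟨l, hl, .inl rfl⟩, ⟨l, hl, .inr (by simp only [cycleLevel]; omega)⟩,
      ⟨l, hc.mem_left, .inr (by simp only [cycleLevel]; omega)⟩]
  have := cyclicOffset_lt x l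
  have edge_sv : ∀ i j, consecPair (F t) i j →
      (j = x ∧ cyclicOffset x l ≤ cyclicOffset x i) ∨
        (j ≠ x ∧ cyclicOffset x i < cyclicOffset x j ∧
          ¬(cyclicOffset x i < cyclicOffset x l ∧ cyclicOffset x l < cyclicOffset x j)) := by
    intro i j hc
    rcases eq_or_ne j x with rfl | hj
    · exact .inl ⟨rfl, hc.cyclicOffset_le_of_right_eq hl⟩
    · have h := hc.cyclicOffset_lt_and_not_between hx hj
      exact .inr ⟨hj, h.1, h.2 l hl⟩
  rcases ((fromRel_adj _ _ _).mp huv).2 with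
    (⟨i, -, rfl, rfl⟩ | ⟨i, j, -, rfl, rfl⟩ | ⟨i, j, hc, rfl, rfl⟩) |
    (⟨i, -, rfl, rfl⟩ | ⟨i, j, -, rfl, rfl⟩ | ⟨i, j, hc, rfl, rfl⟩)
  all_goals simp only [cycleLevel] at hwl ⊢
  · have hix : i ≠ x := by rintro rfl; exact hne rfl
    split_ifs at hwl ⊢ <;> omega
  · split_ifs at hwl <;> omega
  · have := cyclicOffset_lt x j
    rcases edge_sv i j hc with ⟨rfl, h⟩ | ⟨hj, h⟩ <;> split_ifs at hwl ⊢ <;> omega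
  · have hix : i ≠ x := by rintro rfl; exact hne Sym2.eq_swap
    split_ifs at hwl ⊢ <;> omega
  · split_ifs at hwl <;> omega
  · rcases edge_sv i j hc with ⟨rfl, h⟩ | ⟨hj, h⟩ <;> split_ifs at hwl ⊢ <;> omega

theorem isAcyclic_deleteEdges_hsColorGraph {x : Fin n} (hx : x ∈ F t)
    {E : Set (Sym2 (HSVertex n α))} (hE : s(.inl (x, false), .inl (x, true)) ∈ E) :
    ((hsColorGraph n α F t).deleteEdges E).IsAcyclic := by
  have hsupp := support_mono (deleteEdges_le (G := hsColorGraph n α F t) E)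
  refine isAcyclic_of_injOn_support (cycleLevel x) ((cycleLevel_injOn x).mono hsupp) ?_
  intro u v w huv hw
  obtain ⟨huv, huvE⟩ := deleteEdges_adj.mp huv
  exact cycleLevel_not_between hx huv (fun h => huvE (h ▸ hE)) (hsupp hw)

theorem not_isAcyclic_hsColorGraph (hF : (F t).Nonempty) :
    ¬(hsColorGraph n α F t).IsAcyclic := by
  obtain ⟨x, hx⟩ := hF
  intro hac
  apply isBridge_iff.mp (isAcyclic_iff_forall_adj_isBridge.mp hac (hsColorGraph_adj_v_w hx))
  set G' := (hsColorGraph n α F t).deleteEdges {s(.inl (x, false), .inl (x, true))}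
  have reach_v : ∀ i j, consecPair (F t) i j →
      G'.Reachable (.inl (i, true)) (.inl (j, false)) := fun i j hc =>
    (deleteEdges_adj.mpr ⟨hsColorGraph_adj_w_s hc, by simp⟩).reachable.trans
      (deleteEdges_adj.mpr ⟨hsColorGraph_adj_s_v hc, by simp⟩).reachable
  -- walk backwards along the cycle from `w i` to `w x`
  have reach_w : ∀ m, ∀ i ∈ F t, cyclicOffset x i = m →
      G'.Reachable (.inl (x, true)) (.inl (i, true)) := by
    intro m
    induction m using Nat.strong_induction_on with
    | _ m ih =>
      rintro i hi rfl
      rcases eq_or_ne i x with rfl | hix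
      · rfl
      obtain ⟨p, hc⟩ := exists_consecPair_left hi
      refine (ih _ (hc.cyclicOffset_lt_and_not_between hx hix).1 p hc.mem_left rfl).trans
        ((reach_v p i hc).trans (deleteEdges_adj.mpr ⟨hsColorGraph_adj_v_w hi, ?_⟩).reachable)
      simpa using hix
  obtain ⟨p, hc⟩ := exists_consecPair_left hx
  exact ((reach_w _ p hc.mem_left rfl).trans (reach_v p x hc)).symm

def vertexIndex : HSVertex n α → Fin n
  | .inl (i, _) => i
  | .inr (i, _, _) => i

theorem vertexIndex_out_fst_mem {e : Sym2 (HSVertex n α)}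
    (he : e ∈ (hsColorGraph n α F t).edgeSet) : vertexIndex e.out.1 ∈ F t := by
  have hsupp : (hsColorGraph n α F t).support ⊆ {u | vertexIndex u ∈ F t} := fun u hu => by
    rcases mem_support_hsColorGraph hu with ⟨i, hi, rfl⟩ | ⟨i, hi, rfl⟩ | ⟨i, j, hc, rfl⟩
    exacts [hi, hi, hc.mem_left]
  exact Set.mem_sym2_iff_subset.mp (edgeSet_subset_sym2_iff.mpr hsupp he) e.out_fst_mem

end HittingSetGraph

/-- Let `U = Fin n` and `F 1, …, F α ⊆ U` with `|F t| ≥ 2` for all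
`t`, and let `(G, col)` be the `α`-edge-colored graph associated with this Hitting Set
instance.  Then there is `S ⊆ U` with `|S| ≤ k` hitting every `F t` iff `(G, col)` has
a simultaneous feedback edge set of size at most `k`. -/
theorem stmt_9 (n α k : ℕ) (F : Fin α → Finset (Fin n))
    (hF : ∀ t, 2 ≤ (F t).card) :
    (∃ S : Finset (Fin n), S.card ≤ k ∧ ∀ t : Fin α, ∃ x ∈ S, x ∈ F t) ↔
    (∃ S : Finset (Sym2 ((Fin n × Bool) ⊕ (Fin n × Fin n × Fin α))),
      S.card ≤ k ∧
      (S : Set (Sym2 ((Fin n × Bool) ⊕ (Fin n × Fin n × Fin α)))) ⊆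
        (hsGraph n α F).edgeSet ∧
      ∀ t : Fin α,
        ((hsColorGraph n α F t).deleteEdges
          (S : Set (Sym2 ((Fin n × Bool) ⊕ (Fin n × Fin n × Fin α))))).IsAcyclic) := by
  constructor
  · rintro ⟨S, hcard, hhit⟩
    refine ⟨S.image fun x => s(.inl (x, false), .inl (x, true)), Finset.card_image_le.trans hcard,
      ?_, fun t => ?_⟩
    · intro e he
      obtain ⟨x, -, rfl⟩ := Finset.mem_image.mp he
      exact hsGraph_adj_v_w x
    · obtain ⟨x, hxS, hxF⟩ := hhit t
      exact isAcyclic_deleteEdges_hsColorGraph hxF (Finset.mem_image_of_mem _ hxS)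
  · rintro ⟨S, hcard, -, hac⟩
    refine ⟨S.image fun e => vertexIndex e.out.1, Finset.card_image_le.trans hcard, fun t => ?_⟩
    obtain ⟨e, heS, he⟩ := SimpleGraph.exists_mem_edgeSet_of_isAcyclic_deleteEdges
      (not_isAcyclic_hsColorGraph (Finset.card_pos.mp (two_pos.trans_le (hF t)))) (hac t)
    exact ⟨_, Finset.mem_image_of_mem _ heS, vertexIndex_out_fst_mem he⟩
end

section
/- Let (G, col) be an α-edge-colored graph, let e ∈ E(G) and let i ∈ col(e) be such that e does not lie on any cycle of G_i. Let col' be the coloring that agrees with col on every edge except that col'(e) = col(e) \ {i}. Then for every S ⊆ E(G), S is a simultaneous feedback edge set of (G, col) if and only if S is a simultaneous feedback edge set of (G, col'). -/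
/-- For an `α`-edge-colored graph `(G, col)`, the color-`i` graph `G_i`: the spanning
subgraph of `G` whose edges are those edges of `G` whose color set contains `i`. -/
def colorGraph {V : Type*} {α : ℕ} (G : SimpleGraph V) (col : Sym2 V → Set (Fin α))
    (i : Fin α) : SimpleGraph V :=
  SimpleGraph.fromEdgeSet {e | e ∈ G.edgeSet ∧ i ∈ col e}

/-- A simultaneous feedback edge set of an `α`-edge-colored graph `(G, col)`: a set
`S ⊆ E(G)` such that for every color `i`, the graph `G_i − S` is acyclic. -/
def IsSimFES {V : Type*} {α : ℕ} (G : SimpleGraph V) (col : Sym2 V → Set (Fin α))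
    (S : Set (Sym2 V)) : Prop :=
  S ⊆ G.edgeSet ∧ ∀ i : Fin α, ((colorGraph G col i).deleteEdges S).IsAcyclic

lemma acyclic_of_le {V : Type*} {H H' : SimpleGraph V} (h : H' ≤ H) (hH : H.IsAcyclic) :
    H'.IsAcyclic := by
  intro v p hp
  exact hH (p.transfer H (fun f hf => SimpleGraph.edgeSet_mono h (p.edges_subset_edgeSet hf)))
    (hp.transfer _)

/-- Let `(G, col)` be an `α`-edge-colored graph, `e ∈ E(G)` and
`i ∈ col e` such that `e` lies on no cycle of `G_i`. Let `col'` agree with `col`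
everywhere except `col' e = col e \ {i}`. Then for every `S ⊆ E(G)`, `S` is a
simultaneous feedback edge set of `(G, col)` iff it is one of `(G, col')`. -/
theorem stmt_11 {V : Type*} [Fintype V] {α : ℕ} (G : SimpleGraph V)
    (col : Sym2 V → Set (Fin α)) (e : Sym2 V) (he : e ∈ G.edgeSet) (i : Fin α)
    (hi : i ∈ col e)
    (hnc : ¬∃ (a : V) (p : (colorGraph G col i).Walk a a), p.IsCycle ∧ e ∈ p.edges)
    (col' : Sym2 V → Set (Fin α))
    (hcol'e : col' e = col e \ {i})
    (hcol' : ∀ f : Sym2 V, f ≠ e → col' f = col f) :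
    ∀ S : Set (Sym2 V), IsSimFES G col S ↔ IsSimFES G col' S := by
  -- for j ≠ i the color graphs agree
  have hne : ∀ j : Fin α, j ≠ i → colorGraph G col' j = colorGraph G col j := by
    intro j hj
    unfold colorGraph
    congr 1
    ext f
    by_cases hf : f = e
    · subst hf
      simp only [Set.mem_setOf_eq, hcol'e, Set.mem_diff, Set.mem_singleton_iff]
      tauto
    · rw [Set.mem_setOf_eq, Set.mem_setOf_eq, hcol' f hf]
  -- the color-i graph for col' is that of col with e deleted
  have hEq : colorGraph G col' i = (colorGraph G col i).deleteEdges {e} := by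
    ext v w
    simp only [colorGraph, SimpleGraph.fromEdgeSet_adj, Set.mem_setOf_eq,
      SimpleGraph.deleteEdges_adj, Set.mem_singleton_iff]
    by_cases hf : s(v, w) = e
    · rw [hf, hcol'e]
      simp
    · rw [hcol' _ hf]
      tauto
  intro S
  unfold IsSimFES
  constructor
  · rintro ⟨hS, hac⟩
    refine ⟨hS, fun j => ?_⟩
    by_cases hj : j = i
    · subst hj
      rw [hEq, SimpleGraph.deleteEdges_deleteEdges]
      refine acyclic_of_le ?_ (hac j)
      intro v w hvw
      simp only [SimpleGraph.deleteEdges_adj, Set.mem_union] at *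
      tauto
    · rw [hne j hj]; exact hac j
  · rintro ⟨hS, hac⟩
    refine ⟨hS, fun j => ?_⟩
    by_cases hj : j = i
    · subst hj
      intro v p hp
      by_cases hep : e ∈ p.edges
      · exact hnc ⟨v, p.transfer _ (fun f hf =>
          SimpleGraph.edgeSet_mono (SimpleGraph.deleteEdges_le _)
            (p.edges_subset_edgeSet hf)),
          hp.transfer _, by rwa [SimpleGraph.Walk.edges_transfer]⟩
      · have hsub : ∀ f ∈ p.edges, f ∈ ((colorGraph G col' j).deleteEdges S).edgeSet := by
          intro f hf
          have hfe : f ∈ ((colorGraph G col j).deleteEdges S).edgeSet := p.edges_subset_edgeSet hf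
          rw [hEq, SimpleGraph.deleteEdges_deleteEdges, SimpleGraph.edgeSet_deleteEdges]
          rw [SimpleGraph.edgeSet_deleteEdges] at hfe
          refine ⟨hfe.1, ?_⟩
          rintro (h | h)
          · exact hep (h ▸ hf)
          · exact hfe.2 h
        exact hac j (p.transfer _ hsub) (hp.transfer _)
    · rw [← hne j hj]; exact hac j
end

section
/- Let (G, col) be an α-edge-colored graph and let k ∈ ℕ. Let v be a vertex of G with exactly two neighbors u and w, where u ≠ w, u and w are not adjacent in G, and col({v,u}) = col({v,w}) = C. Let G' be the graph obtained from G by deleting v and adding the edge {u,w}, and let col' be the coloring of G' with col'({u,w}) = C and col'(e) = col(e) for every other edge e of G'. Then (G, col) has a simultaneous feedback edge set of size at most k if and only if (G', col') has a simultaneous feedback edge set of size at most k. -/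
namespace SimpleGraph

variable {V : Type*} {H : SimpleGraph V} {v : V}

abbrev deleteVert (H : SimpleGraph V) (v : V) : SimpleGraph {x // x ≠ v} :=
  H.comap Subtype.val

theorem Walk.exists_map_eq_of_notMem_support :
    ∀ {x y : V} (p : H.Walk x y) (hx : x ≠ v) (hy : y ≠ v), v ∉ p.support →
      ∃ q : (H.deleteVert v).Walk ⟨x, hx⟩ ⟨y, hy⟩, q.map (Hom.comap Subtype.val H) = p
  | _, _, .nil, _, _, _ => ⟨.nil, rfl⟩
  | _, _, .cons h p, _, hy, hp => by
    rw [support_cons, List.mem_cons, not_or] at hp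
    obtain ⟨q, hq⟩ := p.exists_map_eq_of_notMem_support
      (fun h ↦ hp.2 (h ▸ p.start_mem_support)) hy hp.2
    exact ⟨.cons (comap_adj.mpr h) q, by rw [Walk.map_cons, hq]; rfl⟩

theorem Walk.IsCycle.exists_adj_adj_walk_of_mem_support {x : V} {c : H.Walk x x}
    (hc : c.IsCycle) (hv : v ∈ c.support) :
    ∃ b d, H.Adj v b ∧ H.Adj v d ∧ b ≠ d ∧ ∃ q : H.Walk b d, v ∉ q.support := by
  classical
  obtain ⟨c, hc⟩ : ∃ c : H.Walk v v, c.IsCycle := ⟨_, hc.rotate hv⟩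
  cases c with
  | nil => exact (hc.not_nil Walk.Nil.nil).elim
  | @cons _ b _ hb p =>
    rw [cons_isCycle_iff] at hc
    obtain ⟨d, hd, q, hpq⟩ := exists_eq_cons_of_ne hb.ne p.reverse
    have hq := hc.1.reverse
    rw [hpq, cons_isPath_iff] at hq
    refine ⟨b, d, hb, hd, ?_, q.reverse, by simpa using hq.2⟩
    rintro rfl
    have : s(v, b) ∈ p.reverse.edges := by simp [hpq]
    exact hc.2 (by simpa using this)

theorem isAcyclic_iff_deleteVert :
    H.IsAcyclic ↔ (H.deleteVert v).IsAcyclic ∧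
      ∀ ⦃b d : V⦄ (hb : H.Adj v b) (hd : H.Adj v d),
        (H.deleteVert v).Reachable ⟨b, hb.ne'⟩ ⟨d, hd.ne'⟩ → b = d := by
  constructor
  · refine fun hH ↦ ⟨hH.comap (Hom.comap _ _) Subtype.val_injective, fun b d hb hd hbd ↦ ?_⟩
    by_contra hne
    obtain ⟨q, hq⟩ := hbd.exists_isPath
    have hvq : v ∉ (q.map (Hom.comap Subtype.val H)).support := by simp
    have := hH.mem_support_of_ne_mem_support_of_adj_of_isPath (p := .cons hb.symm .nil)
      (by simpa using hb.ne') (hq.map Subtype.val_injective) hd hvq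
    simp [Ne.symm hne, hd.ne'] at this
  · rintro ⟨hH, hnbr⟩ x c hc
    by_cases hv : v ∈ c.support
    · obtain ⟨b, d, hb, hd, hbd, q, hq⟩ := hc.exists_adj_adj_walk_of_mem_support hv
      obtain ⟨q', -⟩ := q.exists_map_eq_of_notMem_support hb.ne' hd.ne' hq
      exact hbd (hnbr hb hd ⟨q'⟩)
    · have hx : x ≠ v := fun h ↦ hv (h ▸ c.start_mem_support)
      obtain ⟨c', rfl⟩ := c.exists_map_eq_of_notMem_support hx hx hv
      exact hH c' hc.of_map

theorem isAcyclic_iff_of_suppression {H' : SimpleGraph {x // x ≠ v}} {u w : V} (huw : u ≠ w)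
    (hu : u ≠ v) (hw : w ≠ v) (hnbr : ∀ ⦃x⦄, H.Adj v x → x = u ∨ x = w) (hadj : ¬H.Adj u w)
    (hH' : ∀ a b, H'.Adj a b ↔
      H.Adj a b ∨ s((a : V), (b : V)) = s(u, w) ∧ H.Adj v u ∧ H.Adj v w) :
    H.IsAcyclic ↔ H'.IsAcyclic := by
  have hnbrs : ∀ ⦃b d⦄, H.Adj v b → H.Adj v d → b ≠ d →
      s(b, d) = s(u, w) ∧ H.Adj v u ∧ H.Adj v w := by
    intro b d hb hd hbd
    rcases hnbr hb with rfl | rfl <;> rcases hnbr hd with rfl | rfl <;>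
      simp_all [Sym2.eq_swap]
  rw [isAcyclic_iff_deleteVert]
  by_cases hboth : H.Adj v u ∧ H.Adj v w
  · have hH'_eq : H' = H.deleteVert v ⊔ edge ⟨u, hu⟩ ⟨w, hw⟩ := by
      ext a b
      simp only [hH', hboth, and_true, sup_adj, comap_adj, edge_adj, Sym2.eq_iff, ne_eq,
        Subtype.ext_iff]
      grind
    rw [hH'_eq, isAcyclic_sup_fromEdgeSet_iff]
    refine and_congr_right fun _ ↦ ⟨fun hc hr ↦ (huw (hc hboth.1 hboth.2 hr)).elim, ?_⟩
    intro hc b d hb hd hr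
    by_contra hbd
    have hbd' := (hnbrs hb hd hbd).1
    rw [Sym2.eq_iff] at hbd'
    rcases hbd' with ⟨rfl, rfl⟩ | ⟨rfl, rfl⟩
    · exact (hc hr).elim (fun h ↦ huw (congrArg Subtype.val h)) hadj
    · exact (hc hr.symm).elim (fun h ↦ huw (congrArg Subtype.val h)) hadj
  · have hH'_eq : H' = H.deleteVert v := by
      ext a b
      simp [hH', hboth]
    rw [hH'_eq, and_iff_left_iff_imp]
    exact fun _ b d hb hd _ ↦ by_contra fun hbd ↦ hboth (hnbrs hb hd hbd).2

end SimpleGraph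

section Suppression

open SimpleGraph

theorem colorGraph_adj {V : Type*} {α : ℕ} {G : SimpleGraph V} {col : Sym2 V → Set (Fin α)}
    {i : Fin α} {x y : V} : (colorGraph G col i).Adj x y ↔ G.Adj x y ∧ i ∈ col s(x, y) := by
  simp only [colorGraph, fromEdgeSet_adj, Set.mem_ofPred_eq, mem_edgeSet, and_iff_left_iff_imp]
  exact fun h ↦ h.1.ne

theorem Sym2.notMem_map_subtypeVal {V : Type*} {v : V} (e : Sym2 {x // x ≠ v}) :
    v ∉ e.map Subtype.val := by
  rw [Sym2.mem_map]
  exact fun ⟨a, _, ha⟩ ↦ a.2 ha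

theorem Sym2.map_subtypeVal_ne {V : Type*} {v : V} (e : Sym2 {x // x ≠ v}) (x : V) :
    e.map Subtype.val ≠ s(v, x) :=
  fun he ↦ Sym2.notMem_map_subtypeVal e (he ▸ Sym2.mem_mk_left v x)

variable {V : Type*} [DecidableEq V] {α : ℕ}

/-- `S'` arises from `S` by replacing the edges `vu`, `vw` with `uw`. -/
def IsSuppressedEdgeSet (v u w : V) (S : Set (Sym2 V)) (S' : Set (Sym2 {x // x ≠ v})) : Prop :=
  ∀ e, e ∈ S' ↔ if e.map Subtype.val = s(u, w) then s(v, u) ∈ S ∨ s(v, w) ∈ S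
    else e.map Subtype.val ∈ S

/-- `(G', col')` arises from `(G, col)` by suppressing the degree-two vertex `v`: `v` is deleted
and its neighbours `u`, `w` are joined by an edge coloured like `vu` and `vw`. -/
structure IsSuppression (G : SimpleGraph V) (col : Sym2 V → Set (Fin α)) (v u w : V)
    (G' : SimpleGraph {x // x ≠ v}) (col' : Sym2 {x // x ≠ v} → Set (Fin α)) : Prop where
  ne : u ≠ w
  neighborSet_eq : G.neighborSet v = {u, w}
  not_adj : ¬G.Adj u w
  col_eq : col s(v, u) = col s(v, w)
  adj_iff : ∀ a b, G'.Adj a b ↔ G.Adj a b ∨ s((a : V), (b : V)) = s(u, w)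
  col'_eq : ∀ a b, col' s(a, b) =
    if s((a : V), (b : V)) = s(u, w) then col s(v, u) else col s((a : V), (b : V))

namespace IsSuppression

variable {G : SimpleGraph V} {col : Sym2 V → Set (Fin α)} {v u w : V}
  {G' : SimpleGraph {x // x ≠ v}} {col' : Sym2 {x // x ≠ v} → Set (Fin α)}
  (h : IsSuppression G col v u w G' col')

include h

theorem adj_left : G.Adj v u := by
  rw [← mem_neighborSet, h.neighborSet_eq]; exact Set.mem_insert _ _

theorem adj_right : G.Adj v w := by
  rw [← mem_neighborSet, h.neighborSet_eq]; exact Set.mem_insert_of_mem _ rfl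

theorem eq_or_eq_of_adj {x : V} (hx : G.Adj v x) : x = u ∨ x = w := by
  rwa [← mem_neighborSet, h.neighborSet_eq, Set.mem_insert_iff, Set.mem_singleton_iff] at hx

theorem ne_left : u ≠ v := h.adj_left.ne'

theorem ne_right : w ≠ v := h.adj_right.ne'

theorem eq_or_eq_of_mem_edgeSet {e : Sym2 V} (he : e ∈ G.edgeSet) (hv : v ∈ e) :
    e = s(v, u) ∨ e = s(v, w) := by
  obtain ⟨x, rfl⟩ := Sym2.mem_iff_exists.mp hv
  rcases h.eq_or_eq_of_adj he with rfl | rfl <;> simp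

theorem mem_edgeSet_iff {e : Sym2 {x // x ≠ v}} :
    e ∈ G'.edgeSet ↔ e.map Subtype.val ∈ G.edgeSet ∨ e.map Subtype.val = s(u, w) := by
  induction e using Sym2.ind with
  | _ a b => simp [h.adj_iff]

theorem isAcyclic_iff {S : Set (Sym2 V)} {S' : Set (Sym2 {x // x ≠ v})}
    (hS : IsSuppressedEdgeSet v u w S S') (i : Fin α) :
    ((colorGraph G col i).deleteEdges S).IsAcyclic ↔
      ((colorGraph G' col' i).deleteEdges S').IsAcyclic := by
  have hH : ∀ x y, ((colorGraph G col i).deleteEdges S).Adj x y ↔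
      G.Adj x y ∧ i ∈ col s(x, y) ∧ s(x, y) ∉ S := by
    simp [colorGraph_adj, and_assoc]
  refine isAcyclic_iff_of_suppression h.ne h.ne_left h.ne_right
    (fun x hx ↦ h.eq_or_eq_of_adj ((hH v x).mp hx).1) (fun huw ↦ h.not_adj ((hH u w).mp huw).1)
    fun a b ↦ ?_
  simp only [deleteEdges_adj, colorGraph_adj, h.adj_iff, h.col'_eq, hS s(a, b), Sym2.map_mk]
  split_ifs with hab
  · have hGab : ¬G.Adj a b := by
      rw [← mem_edgeSet, hab]
      exact h.not_adj
    simp [hab, hGab, h.adj_left, h.adj_right, h.col_eq]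
    tauto
  · simp [hab, and_assoc]

theorem exists_suppressed_card_le (S : Finset (Sym2 V)) (hS : ↑S ⊆ G.edgeSet) :
    ∃ S' : Finset (Sym2 {x // x ≠ v}), S'.card ≤ S.card ∧ ↑S' ⊆ G'.edgeSet ∧
      IsSuppressedEdgeSet v u w S S' := by
  let g : V → {x // x ≠ v} := fun x ↦ if hx : x = v then ⟨u, h.ne_left⟩ else ⟨x, hx⟩
  let f : Sym2 V → Sym2 {x // x ≠ v} := fun e ↦
    if v ∈ e then s(⟨u, h.ne_left⟩, ⟨w, h.ne_right⟩) else e.map g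
  have hf : ∀ e, (f e).map Subtype.val = if v ∈ e then s(u, w) else e := by
    intro e
    unfold f
    split_ifs with hv
    · rfl
    · rw [Sym2.map_map]
      refine (Sym2.map_congr fun x hx ↦ ?_).trans (congrFun Sym2.map_id e)
      simp [g, ne_of_mem_of_not_mem hx hv]
  refine ⟨S.image f, Finset.card_image_le, ?_, fun e' ↦ ?_⟩
  · intro _ he'
    obtain ⟨e, he, rfl⟩ := Finset.mem_image.mp he'
    rw [h.mem_edgeSet_iff, hf]
    split_ifs
    exacts [.inr rfl, .inl (hS he)]
  have hmem : e' ∈ S.image f ↔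
      ∃ e ∈ S, (if v ∈ e then s(u, w) else e) = e'.map Subtype.val := by
    simp only [Finset.mem_image, ← hf, (Sym2.map.injective Subtype.val_injective).eq_iff]
  rw [Finset.mem_coe, hmem]
  split_ifs with huw
  · constructor
    · rintro ⟨e, he, hfe⟩
      split_ifs at hfe with hv
      · rcases h.eq_or_eq_of_mem_edgeSet (hS he) hv with rfl | rfl
        exacts [.inl he, .inr he]
      · refine (h.not_adj ?_).elim
        rw [← mem_edgeSet, ← huw, ← hfe]
        exact hS he
    · rintro (hvu | hvw)
      exacts [⟨_, hvu, by simp [huw]⟩, ⟨_, hvw, by simp [huw]⟩]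
  · constructor
    · rintro ⟨e, he, hfe⟩
      split_ifs at hfe with hv
      exacts [(huw hfe.symm).elim, hfe ▸ he]
    · exact fun he ↦ ⟨_, he, if_neg (Sym2.notMem_map_subtypeVal e')⟩

theorem exists_unsuppressed_card_le (S' : Finset (Sym2 {x // x ≠ v}))
    (hS' : ↑S' ⊆ G'.edgeSet) :
    ∃ S : Finset (Sym2 V), S.card ≤ S'.card ∧ ↑S ⊆ G.edgeSet ∧
      IsSuppressedEdgeSet v u w S S' := by
  let f : Sym2 {x // x ≠ v} → Sym2 V := fun e' ↦
    if e'.map Subtype.val = s(u, w) then s(v, u) else e'.map Subtype.val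
  have hinj : Function.Injective (Sym2.map (Subtype.val : {x // x ≠ v} → V)) :=
    Sym2.map.injective Subtype.val_injective
  have hf_vu : ∀ e', f e' = s(v, u) ↔ e'.map Subtype.val = s(u, w) := by
    intro e'
    unfold f
    split_ifs with huw
    · simp [huw]
    · exact iff_of_false (Sym2.map_subtypeVal_ne e' u) huw
  have hf_vw : ∀ e', f e' ≠ s(v, w) := by
    intro e'
    unfold f
    split_ifs
    · exact mt Sym2.congr_right.mp h.ne
    · exact Sym2.map_subtypeVal_ne e' w
  refine ⟨S'.image f, Finset.card_image_le, ?_, fun e' ↦ ?_⟩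
  · intro _ he
    obtain ⟨e', he', rfl⟩ := Finset.mem_image.mp he
    have := h.mem_edgeSet_iff.mp (hS' he')
    unfold f
    split_ifs with huw
    exacts [h.adj_left, this.resolve_right huw]
  simp only [Finset.coe_image, Set.mem_image, Finset.mem_coe]
  split_ifs with huw
  · simp only [hf_vu, hf_vw, and_false, exists_false, or_false, ← huw, hinj.eq_iff,
      exists_eq_right]
  · have : ∀ e'', f e'' = e'.map Subtype.val ↔ e'' = e' := by
      intro e''
      unfold f
      split_ifs with h''
      · exact iff_of_false (Sym2.map_subtypeVal_ne e' u).symm fun h' ↦ huw (h' ▸ h'')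
      · exact hinj.eq_iff
    simp only [this, exists_eq_right]

theorem exists_isSimFES_iff (k : ℕ) :
    (∃ S : Finset (Sym2 V), S.card ≤ k ∧ IsSimFES G col S) ↔
      ∃ S' : Finset (Sym2 {x // x ≠ v}), S'.card ≤ k ∧ IsSimFES G' col' S' := by
  constructor
  · rintro ⟨S, hk, hSG, hS⟩
    obtain ⟨S', hcard, hS'G', hSS'⟩ := h.exists_suppressed_card_le S hSG
    exact ⟨S', hcard.trans hk, hS'G', fun i ↦ (h.isAcyclic_iff hSS' i).mp (hS i)⟩
  · rintro ⟨S', hk, hS'G', hS'⟩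
    obtain ⟨S, hcard, hSG, hSS'⟩ := h.exists_unsuppressed_card_le S' hS'G'
    exact ⟨S, hcard.trans hk, hSG, fun i ↦ (h.isAcyclic_iff hSS' i).mpr (hS' i)⟩

end IsSuppression

end Suppression

theorem stmt_12_general {V : Type*} [DecidableEq V] {α : ℕ} (G : SimpleGraph V)
    (col : Sym2 V → Set (Fin α)) (k : ℕ) (v u w : V) (huw : u ≠ w)
    (hnbr : G.neighborSet v = {u, w}) (hadj : ¬G.Adj u w)
    (C : Set (Fin α)) (hcu : col s(v, u) = C) (hcw : col s(v, w) = C)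
    (G' : SimpleGraph {x : V // x ≠ v})
    (hG' : ∀ a b : {x : V // x ≠ v},
        G'.Adj a b ↔ G.Adj (a : V) (b : V) ∨
          ((a : V) = u ∧ (b : V) = w) ∨ ((a : V) = w ∧ (b : V) = u))
    (col' : Sym2 {x : V // x ≠ v} → Set (Fin α))
    (hcol' : ∀ a b : {x : V // x ≠ v},
        col' s(a, b) =
          if ((a : V) = u ∧ (b : V) = w) ∨ ((a : V) = w ∧ (b : V) = u) then C
          else col s((a : V), (b : V))) :
    (∃ S : Finset (Sym2 V), S.card ≤ k ∧ IsSimFES G col (S : Set (Sym2 V))) ↔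
    (∃ S : Finset (Sym2 {x : V // x ≠ v}), S.card ≤ k ∧
        IsSimFES G' col' (S : Set (Sym2 {x : V // x ≠ v}))) := by
  have h : IsSuppression G col v u w G' col' :=
    { ne := huw
      neighborSet_eq := hnbr
      not_adj := hadj
      col_eq := hcu.trans hcw.symm
      adj_iff := fun a b ↦ by rw [hG', Sym2.eq_iff]
      col'_eq := fun a b ↦ by simp only [hcol', Sym2.eq_iff, hcu] }
  exact h.exists_isSimFES_iff k

/-- Let `(G, col)` be an `α`-edge-colored graph and `k ∈ ℕ`. Let `v`
be a vertex with exactly two neighbors `u ≠ w`, with `u, w` non-adjacent in `G` and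
`col {v,u} = col {v,w} = C`. Let `G'` be obtained from `G` by deleting `v` and adding
the edge `{u,w}`, with coloring `col'` giving `{u,w}` the color set `C` and every other
edge its old color set. Then `(G, col)` has a simultaneous feedback edge set of size at
most `k` iff `(G', col')` does. -/
theorem stmt_12 {V : Type*} [Fintype V] [DecidableEq V] {α : ℕ} (G : SimpleGraph V)
    (col : Sym2 V → Set (Fin α)) (k : ℕ) (v u w : V) (huw : u ≠ w)
    (hnbr : G.neighborSet v = {u, w}) (hadj : ¬G.Adj u w)
    (C : Set (Fin α)) (hcu : col s(v, u) = C) (hcw : col s(v, w) = C)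
    (G' : SimpleGraph {x : V // x ≠ v})
    (hG' : ∀ a b : {x : V // x ≠ v},
        G'.Adj a b ↔ G.Adj (a : V) (b : V) ∨
          ((a : V) = u ∧ (b : V) = w) ∨ ((a : V) = w ∧ (b : V) = u))
    (col' : Sym2 {x : V // x ≠ v} → Set (Fin α))
    (hcol' : ∀ a b : {x : V // x ≠ v},
        col' s(a, b) =
          if ((a : V) = u ∧ (b : V) = w) ∨ ((a : V) = w ∧ (b : V) = u) then C
          else col s((a : V), (b : V))) :
    (∃ S : Finset (Sym2 V), S.card ≤ k ∧ IsSimFES G col (S : Set (Sym2 V))) ↔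
    (∃ S : Finset (Sym2 {x : V // x ≠ v}), S.card ≤ k ∧
        IsSimFES G' col' (S : Set (Sym2 {x : V // x ≠ v}))) :=
  stmt_12_general G col k v u w huw hnbr hadj C hcu hcw G' hG' col' hcol'
end
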